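/- arXiv:1906.11448 — 7 statements merged into one kernel-verified Lean document; each statement's English description precedes it below -/
import Mathlib

section
/- Let N and M be elements of GL(3,ℤ) such that (i) N·M = M·N, (ii) 1 is an eigenvalue of N^n·M^m for every (n,m) ∈ ℤ², and (iii) the only k ∈ ℤ³ satisfying N^n·M^m·k = k for all (n,m) ∈ ℤ² is k = 0. Then there exist P ∈ GL(3,ℤ) and integers a, b, c, d such that P⁻¹ N P = N(a,b) and P⁻¹ M P = M(c,d). -/
open Matrix

/-- The matrix N(a,b) = [[1,a,b],[0,-1,0],[0,0,-1]]. -/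
def Nmat (a b : ℤ) : Matrix (Fin 3) (Fin 3) ℤ := !![1, a, b; 0, -1, 0; 0, 0, -1]

/-- The matrix M(c,d) = [[-1,0,c],[0,-1,d],[0,0,1]]. -/
def Mmat (c d : ℤ) : Matrix (Fin 3) (Fin 3) ℤ := !![-1, 0, c; 0, -1, d; 0, 0, 1]

/-!
Let `φ, ψ` be the endomorphisms of `ℤ³` given by `N, M`. Over `ℚ`, each of `φ, ψ` has a fixed
line on which the other one acts by a scalar `≠ 1`; in a basis starting with these two lines both
maps are upper triangular, and the vanishing of `det (φⁿψᵐ - 1)` for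
`(n, m) = (1, 1), (2, 1), (1, 2), (3, 1)` together with `φψ = ψφ` forces `φ² = ψ² = 1` and
`ψ = -1` on the fixed line of `φ`.

Back over `ℤ`, the fixed lattice of `φ` is a line `ℤ u` inside the rank-two lattice
`ker (ψ + 1)`. As `φ, ψ` are involutions, `φ + 1` maps `ℤ³` into `ℤ u` and `ψ - 1` maps it into
`ker (ψ + 1)`. The images of `φ - 1` on `ker (ψ + 1)` and of `ψ + 1` on `ℤ³` have rank one, hence
are cyclic, which yields `v` with `ker (ψ + 1) = ℤ u + ℤ v` and `w` with
`ℤ³ = ker (ψ + 1) + ℤ w`. In the basis `(u, v, w)`, `φ = N(a, b)` and `ψ = M(c, d)`.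
-/

open Module

/-- Conditions (i)–(iii) of the theorem, with non-negative exponents. -/
structure Module.End.IsEigenvalueOnePair {R M : Type*} [CommRing R] [AddCommGroup M] [Module R M]
    (f g : Module.End R M) : Prop where
  commute : Commute f g
  det_pow_mul_pow_sub_one : ∀ n m : ℕ, LinearMap.det (f ^ n * g ^ m - 1) = 0
  eq_zero_of_apply_eq_self : ∀ x, f x = x → g x = x → x = 0

namespace Module.End

theorem mem_ker_sub_one {R M : Type*} [Ring R] [AddCommGroup M] [Module R M]
    {f : Module.End R M} {x : M} : x ∈ LinearMap.ker (f - 1) ↔ f x = x := by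
  simp [sub_eq_zero]

theorem exists_ne_zero_apply_eq_self_of_det {R M : Type*} [CommRing R] [IsDomain R]
    [AddCommGroup M] [Module R M] [Module.Free R M] {f : Module.End R M}
    (h : LinearMap.det (f - 1) = 0) : ∃ x ≠ 0, f x = x := by
  obtain ⟨x, hx, hx0⟩ :=
    (Submodule.ne_bot_iff _).mp (bot_lt_iff_ne_bot.mp (LinearMap.bot_lt_ker_of_det_eq_zero h))
  exact ⟨x, hx0, by simpa [sub_eq_zero] using hx⟩

namespace IsEigenvalueOnePair

variable {R M : Type*} [CommRing R] [AddCommGroup M] [Module R M] {f g : Module.End R M}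

theorem symm (h : IsEigenvalueOnePair f g) : IsEigenvalueOnePair g f where
  commute := h.commute.symm
  det_pow_mul_pow_sub_one n m := by
    rw [← (h.commute.pow_pow m n).eq]
    exact h.det_pow_mul_pow_sub_one m n
  eq_zero_of_apply_eq_self x hg hf := h.eq_zero_of_apply_eq_self x hf hg

theorem apply_comm (h : IsEigenvalueOnePair f g) (x : M) : g (f x) = f (g x) :=
  LinearMap.congr_fun h.commute.eq.symm x

theorem exists_ne_zero_apply_eq_self [IsDomain R] [Module.Free R M]
    (h : IsEigenvalueOnePair f g) : ∃ x ≠ 0, f x = x :=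
  exists_ne_zero_apply_eq_self_of_det (by simpa using h.det_pow_mul_pow_sub_one 1 0)

end IsEigenvalueOnePair

end Module.End

open Module.End

section Basis

variable {R M : Type*} [CommRing R] [AddCommGroup M] [Module R M]

theorem Module.Basis.apply_equivFun_symm_eq_self {ι : Type*} [Fintype ι] [DecidableEq ι]
    (b : Basis ι R M) {χ : Module.End R M} {z : ι → R}
    (hz : LinearMap.toMatrix b b χ *ᵥ z = z) : χ (b.equivFun.symm z) = b.equivFun.symm z :=
  b.equivFun.injective (by
    rw [LinearEquiv.apply_symm_apply, b.equivFun_apply, ← LinearMap.toMatrix_mulVec_repr b b,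
      ← b.equivFun_apply, LinearEquiv.apply_symm_apply, hz])

theorem Module.Basis.involutive_of_toMatrix_sq_eq_one {ι : Type*} [Fintype ι] [DecidableEq ι]
    (b : Basis ι R M) {χ : Module.End R M} (h : LinearMap.toMatrix b b χ ^ 2 = 1) :
    Function.Involutive χ := fun x => by
  have : χ ^ 2 = 1 := (LinearMap.toMatrixAlgEquiv b).injective (by rw [map_pow, map_one]; exact h)
  simpa [sq] using LinearMap.congr_fun this x

theorem Module.Basis.coord_two_apply_eq_mul (b : Basis (Fin 3) R M) {f : Module.End R M}
    (h₀ : b.coord 2 (f (b 0)) = 0) (h₁ : b.coord 2 (f (b 1)) = 0) (x : M) :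
    b.coord 2 (f x) = b.coord 2 (f (b 2)) * b.coord 2 x := by
  have : b.coord 2 ∘ₗ f = b.coord 2 (f (b 2)) • b.coord 2 :=
    b.ext fun i => by fin_cases i <;> simp [h₀, h₁]
  simpa using LinearMap.congr_fun this x

theorem Module.Basis.apply_eq_self_of_coord_two_eq_zero (b : Basis (Fin 3) R M)
    {f : Module.End R M} (h₀ : f (b 0) = b 0) (h₁ : f (b 1) = b 1) {x : M}
    (hx : b.coord 2 x = 0) : f x = x := by
  rw [← b.sum_repr x, Fin.sum_univ_three]
  simp_all

theorem Module.Basis.toMatrix_eq_fin_three_upper (b : Basis (Fin 3) R M) {f : Module.End R M}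
    {x y : R} (h₀ : f (b 0) = x • b 0) (h₁ : f (b 1) = y • b 1) :
    LinearMap.toMatrix b b f = !![x, 0, LinearMap.toMatrix b b f 0 2;
      0, y, LinearMap.toMatrix b b f 1 2; 0, 0, LinearMap.toMatrix b b f 2 2] := by
  ext i j
  fin_cases i <;> fin_cases j <;> simp [LinearMap.toMatrix_apply, h₀, h₁]

theorem Matrix.fin_three_upper_mul (x y t p q x' y' t' p' q' : R) :
    !![x, 0, p; 0, y, q; 0, 0, t] * !![x', 0, p'; 0, y', q'; 0, 0, t'] =
      !![x * x', 0, x * p' + p * t'; 0, y * y', y * q' + q * t'; 0, 0, t * t'] := by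
  simp

theorem Matrix.det_fin_three_upper_sub_one (x y t p q : R) :
    (!![x, 0, p; 0, y, q; 0, 0, t] - 1).det = (x - 1) * (y - 1) * (t - 1) := by
  simp [Matrix.det_fin_three, Matrix.one_fin_three]

end Basis

section Field

variable {K V : Type*} [Field K] [AddCommGroup V] [Module K V]

theorem LinearIndependent.exists_basis_fin_three {e₀ e₁ : V}
    (h : LinearIndependent K ![e₀, e₁]) (hV : finrank K V = 3) :
    ∃ b : Basis (Fin 3) K V, b 0 = e₀ ∧ b 1 = e₁ := by
  have : FiniteDimensional K V := .of_finrank_pos (by omega)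
  obtain ⟨e₂, he⟩ := exists_linearIndependent_snoc_of_lt_finrank h (by omega)
  exact ⟨basisOfLinearIndependentOfCardEqFinrank he (by simp [hV]), by simp, by simp⟩

theorem Matrix.sq_eq_one_of_fin_three_upper {T S : Matrix (Fin 3) (Fin 3) K}
    {r r' t s a c p q : K} (hT : T = !![1, 0, a; 0, r, c; 0, 0, t])
    (hS : S = !![r', 0, p; 0, 1, q; 0, 0, s]) (hr : r ≠ 1) (hr' : r' ≠ 1) (hTS : T * S = S * T)
    (hdet : ∀ n m : ℕ, (T ^ n * S ^ m - 1).det = 0)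
    (hfix : ∀ z, T *ᵥ z = z → S *ᵥ z = z → z = 0) :
    T ^ 2 = 1 ∧ S ^ 2 = 1 ∧ r' = -1 := by
  subst hT hS
  have h11 := hdet 1 1
  have h21 := hdet 2 1
  have h12 := hdet 1 2
  have h31 := hdet 3 1
  simp only [pow_succ, pow_zero, one_mul, mul_one, fin_three_upper_mul,
    det_fin_three_upper_sub_one] at h11 h21 h12 h31
  have hts : t * s = 1 := by simpa [sub_eq_zero, hr, hr'] using h11
  rw [show t * t * s = t by linear_combination t * hts] at h21
  rw [show t * (s * s) = s by linear_combination s * hts] at h12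
  rw [show t * t * t * s = t * t by linear_combination t * t * hts] at h31
  simp [sub_eq_zero, hr, hr', mul_self_eq_one_iff] at h21 h12 h31
  have h02 := congrFun (congrFun hTS 0) 2
  have h12' := congrFun (congrFun hTS 1) 2
  simp at h02 h12'
  by_cases ht : t = 1
  -- Then commutation forces `a = q = 0`, and `T`, `S` have an explicit common fixed vector.
  · obtain rfl : s = 1 := by rwa [ht, one_mul] at hts
    subst ht
    obtain rfl : a = 0 := (mul_eq_zero.mp
      (by linear_combination -h02 : (r' - 1) * a = 0)).resolve_left (sub_ne_zero.mpr hr')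
    obtain rfl : q = 0 := (mul_eq_zero.mp
      (by linear_combination h12' : (r - 1) * q = 0)).resolve_left (sub_ne_zero.mpr hr)
    have := hfix ![-p / (r' - 1), -c / (r - 1), 1]
      (by ext i; fin_cases i <;> simp [mulVec, dotProduct, Fin.sum_univ_three]; field_simp; ring)
      (by ext i; fin_cases i <;> simp [mulVec, dotProduct, Fin.sum_univ_three]; field_simp; ring)
    simpa using congrFun this 2
  -- Otherwise `r = r' = t = s = -1`, and commutation forces `p = c = 0`.
  obtain rfl : r = -1 := h21.resolve_right ht
  obtain rfl : r' = -1 := h12.resolve_right fun hs => ht (by rwa [hs, mul_one] at hts)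
  have two : (2 : K) ≠ 0 := fun h => hr (by linear_combination -h)
  obtain rfl : t = -1 := (h31.resolve_left fun h => hr (by linear_combination h)).resolve_left ht
  obtain rfl : s = -1 := by linear_combination -hts
  obtain rfl : p = 0 :=
    (mul_eq_zero.mp (by linear_combination h02 : (2 : K) * p = 0)).resolve_left two
  obtain rfl : c = 0 :=
    (mul_eq_zero.mp (by linear_combination -h12' : (2 : K) * c = 0)).resolve_left two
  refine ⟨?_, ?_, rfl⟩ <;> simp [sq, Matrix.one_fin_three]

namespace Module.End.IsEigenvalueOnePair

variable {f g : Module.End K V}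

theorem not_linearIndependent (h : IsEigenvalueOnePair f g) (hV : finrank K V = 3) {v w : V}
    (hv : f v = v) (hw : f w = w) : ¬ LinearIndependent K ![v, w] := by
  intro hvw
  obtain ⟨b, rfl, rfl⟩ := hvw.exists_basis_fin_three hV
  -- `f` acts on `V ⧸ span {b 0, b 1}` by `t`, and trivially on `span {b 0, b 1}`.
  have hf_coord := b.coord_two_apply_eq_mul (f := f) (by simp [hv]) (by simp [hw])
  set t := b.coord 2 (f (b 2))
  have hfixed : ∀ x, b.coord 2 x = 0 → f x = x := fun x =>
    b.apply_eq_self_of_coord_two_eq_zero hv hw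
  obtain ⟨x, hx0, hgx⟩ := h.symm.exists_ne_zero_apply_eq_self
  by_cases ht : t = 1
  -- Then `(f - 1) ^ 2 = 0`, so `f x - x` is a common fixed vector.
  · have hfx : f (f x - x) = f x - x :=
      hfixed _ (by rw [map_sub, hf_coord, ht, one_mul, sub_self])
    have hgfx : g (f x - x) = f x - x := by rw [map_sub, h.apply_comm, hgx]
    exact hx0 (h.eq_zero_of_apply_eq_self x
      (sub_eq_zero.mp (h.eq_zero_of_apply_eq_self _ hfx hgfx)) hgx)
  -- Otherwise `span {b 0, b 1}` is the fixed space of `f`, so `g` preserves it and acts on the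
  -- quotient by some `s`. A fixed vector of `g` lies off the plane, so `s = 1`; then a fixed
  -- vector of `f * g` lies in the plane, where it is fixed by both `f` and `g`.
  have hcoord_eq_zero : ∀ y, t * b.coord 2 y = b.coord 2 y → b.coord 2 y = 0 := fun y hy =>
    (mul_eq_zero.mp (by linear_combination hy : (t - 1) * b.coord 2 y = 0)).resolve_left
      (sub_ne_zero.mpr ht)
  have hcoord_fixed : ∀ y, f y = y → b.coord 2 y = 0 := fun y hy =>
    hcoord_eq_zero y (by rw [← hf_coord, hy])
  have hg_coord := b.coord_two_apply_eq_mul (f := g)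
    (hcoord_fixed _ (by rw [← h.apply_comm, hv])) (hcoord_fixed _ (by rw [← h.apply_comm, hw]))
  set s := b.coord 2 (g (b 2))
  have hs : s = 1 := by
    have hx : b.coord 2 x ≠ 0 := fun hx => hx0 (h.eq_zero_of_apply_eq_self x (hfixed x hx) hgx)
    have hsx := hg_coord x
    rw [hgx] at hsx
    exact mul_right_cancel₀ hx (by rw [one_mul, ← hsx])
  obtain ⟨y, hy0, hfgy⟩ := exists_ne_zero_apply_eq_self_of_det (h.det_pow_mul_pow_sub_one 1 1)
  replace hfgy : f (g y) = y := by simpa using hfgy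
  have hy : b.coord 2 y = 0 := by
    have hty := hf_coord (g y)
    rw [hfgy, hg_coord, hs, one_mul] at hty
    exact hcoord_eq_zero y hty.symm
  have hgy : g y = y := (hfixed (g y) (by rw [hg_coord, hy, mul_zero])).symm.trans hfgy
  exact hy0 (h.eq_zero_of_apply_eq_self y (hfixed y hy) hgy)

theorem exists_apply_eq_smul (h : IsEigenvalueOnePair f g) (hV : finrank K V = 3) {e : V}
    (he : e ≠ 0) (hfe : f e = e) : ∃ r : K, r ≠ 1 ∧ g e = r • e := by
  obtain ⟨r, hr⟩ : ∃ r : K, r • e = g e := by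
    simpa [LinearIndependent.pair_iff' he] using
      h.not_linearIndependent hV hfe (by rw [← h.apply_comm, hfe])
  refine ⟨r, ?_, hr.symm⟩
  rintro rfl
  exact he (h.eq_zero_of_apply_eq_self e hfe (by rw [← hr, one_smul]))

theorem exists_basis_apply_eq_smul (h : IsEigenvalueOnePair f g) (hV : finrank K V = 3) :
    ∃ (b : Basis (Fin 3) K V) (r r' : K), r ≠ 1 ∧ r' ≠ 1 ∧
      f (b 0) = b 0 ∧ g (b 0) = r' • b 0 ∧ f (b 1) = r • b 1 ∧ g (b 1) = b 1 := by
  obtain ⟨e, he, hfe⟩ := h.exists_ne_zero_apply_eq_self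
  obtain ⟨e', he', hge'⟩ := h.symm.exists_ne_zero_apply_eq_self
  obtain ⟨r', hr'₁, hr'⟩ := h.exists_apply_eq_smul hV he hfe
  obtain ⟨r, hr₁, hr⟩ := h.symm.exists_apply_eq_smul hV he' hge'
  have hind : LinearIndependent K ![e, e'] := (LinearIndependent.pair_iff' he).mpr fun a ha =>
    he' (h.eq_zero_of_apply_eq_self e' (by rw [← ha, map_smul, hfe]) hge')
  obtain ⟨b, rfl, rfl⟩ := hind.exists_basis_fin_three hV
  exact ⟨b, r, r', hr₁, hr'₁, hfe, hr', hr, hge'⟩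

theorem involutive_and_apply_eq_neg (h : IsEigenvalueOnePair f g) (hV : finrank K V = 3) :
    Function.Involutive f ∧ Function.Involutive g ∧ ∀ x, f x = x → g x = -x := by
  obtain ⟨b, r, r', hr, hr', hf₀, hg₀, hf₁, hg₁⟩ := h.exists_basis_apply_eq_smul hV
  have hmat : ∀ χ : Module.End K V, LinearMap.toMatrix b b χ = LinearMap.toMatrixAlgEquiv b χ :=
    fun _ => rfl
  obtain ⟨hT, hS, rfl⟩ := Matrix.sq_eq_one_of_fin_three_upper
    (b.toMatrix_eq_fin_three_upper (x := 1) (by rw [one_smul, hf₀]) hf₁)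
    (b.toMatrix_eq_fin_three_upper (y := 1) hg₀ (by rw [one_smul, hg₁])) hr hr'
    (by simp only [hmat, ← map_mul, h.commute.eq])
    (fun n m => by
      rw [← h.det_pow_mul_pow_sub_one n m, ← LinearMap.det_toMatrix b]
      simp only [hmat, map_sub, map_mul, map_pow, map_one])
    (fun z hfz hgz => (LinearEquiv.map_eq_zero_iff _).mp (h.eq_zero_of_apply_eq_self _
      (b.apply_equivFun_symm_eq_self hfz) (b.apply_equivFun_symm_eq_self hgz)))
  refine ⟨b.involutive_of_toMatrix_sq_eq_one hT, b.involutive_of_toMatrix_sq_eq_one hS,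
    fun x hx => ?_⟩
  obtain ⟨a, rfl⟩ : ∃ a : K, a • b 0 = x := by
    simpa [LinearIndependent.pair_iff' (b.ne_zero 0)] using h.not_linearIndependent hV hf₀ hx
  rw [map_smul, hg₀, neg_one_smul, smul_neg]

end Module.End.IsEigenvalueOnePair

end Field

section BaseChange

open TensorProduct

variable {M : Type*} [AddCommGroup M]

theorem exists_zsmul_eq_one_tmul (v : ℚ ⊗[ℤ] M) : ∃ c : ℤ, c ≠ 0 ∧ ∃ x : M, c • v = 1 ⊗ₜ x := by
  obtain ⟨⟨x, c⟩, h⟩ := IsLocalizedModule.surj (nonZeroDivisors ℤ) (TensorProduct.mk ℤ ℚ M 1) v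
  exact ⟨c, nonZeroDivisors.coe_ne_zero c, x, h⟩

theorem LinearIndependent.one_tmul {x y : M} (h : LinearIndependent ℤ ![x, y]) :
    LinearIndependent ℚ ![(1 : ℚ) ⊗ₜ[ℤ] x, 1 ⊗ₜ y] := by
  have := h.of_isLocalizedModule (nonZeroDivisors ℤ) (Rₛ := ℚ) (TensorProduct.mk ℤ ℚ M 1)
  rwa [show TensorProduct.mk ℤ ℚ M 1 ∘ ![x, y] = ![1 ⊗ₜ x, 1 ⊗ₜ y] by
    ext i; fin_cases i <;> rfl] at this

variable [Module.Free ℤ M]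

theorem one_tmul_injective : Function.Injective fun x : M => (1 : ℚ) ⊗ₜ[ℤ] x := by
  refine (injective_iff_map_eq_zero (TensorProduct.mk ℤ ℚ M 1)).mpr fun x hx => ?_
  obtain ⟨s, hs⟩ := (IsLocalizedModule.eq_zero_iff (nonZeroDivisors ℤ) _).mp hx
  exact (smul_eq_zero.mp hs).resolve_left (nonZeroDivisors.coe_ne_zero s)

namespace Module.End.IsEigenvalueOnePair

variable [Module.Finite ℤ M] {φ ψ : Module.End ℤ M}

theorem baseChange (h : IsEigenvalueOnePair φ ψ) :
    IsEigenvalueOnePair (φ.baseChange ℚ) (ψ.baseChange ℚ) where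
  commute := by
    simp only [Commute, SemiconjBy, ← LinearMap.baseChange_mul, h.commute.eq]
  det_pow_mul_pow_sub_one n m := by
    rw [← LinearMap.baseChange_pow, ← LinearMap.baseChange_pow, ← LinearMap.baseChange_mul,
      ← LinearMap.baseChange_one, ← LinearMap.baseChange_sub, LinearMap.det_baseChange,
      h.det_pow_mul_pow_sub_one, map_zero]
  eq_zero_of_apply_eq_self v hφv hψv := by
    obtain ⟨c, hc, x, hx⟩ := exists_zsmul_eq_one_tmul v
    have descend : ∀ χ : Module.End ℤ M, χ.baseChange ℚ v = v → χ x = x := fun χ hχ =>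
      one_tmul_injective (by simp only [← LinearMap.baseChange_tmul, ← hx, map_zsmul, hχ])
    rw [h.eq_zero_of_apply_eq_self x (descend φ hφv) (descend ψ hψv), TensorProduct.tmul_zero,
      ← Int.cast_smul_eq_zsmul ℚ] at hx
    exact (smul_eq_zero.mp hx).resolve_left (Int.cast_ne_zero.mpr hc)

theorem not_linearIndependent_int (h : IsEigenvalueOnePair φ ψ) (hM : finrank ℤ M = 3)
    {x y : M} (hx : φ x = x) (hy : φ y = y) : ¬ LinearIndependent ℤ ![x, y] := fun hxy =>
  h.baseChange.not_linearIndependent (by rw [finrank_baseChange, hM]) (by simp [hx])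
    (by simp [hy]) hxy.one_tmul

theorem involutive_and_apply_eq_neg_int (h : IsEigenvalueOnePair φ ψ) (hM : finrank ℤ M = 3) :
    Function.Involutive φ ∧ Function.Involutive ψ ∧ ∀ x, φ x = x → ψ x = -x := by
  obtain ⟨hφ, hψ, hneg⟩ :=
    h.baseChange.involutive_and_apply_eq_neg (by rw [finrank_baseChange, hM])
  refine ⟨fun x => one_tmul_injective ?_, fun x => one_tmul_injective ?_,
    fun x hx => one_tmul_injective ?_⟩
  · simpa using hφ (1 ⊗ₜ x)
  · simpa using hψ (1 ⊗ₜ x)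
  · simpa [hx, TensorProduct.tmul_neg] using hneg (1 ⊗ₜ x) (by simp [hx])

end Module.End.IsEigenvalueOnePair

end BaseChange

section Lattice

open Submodule LinearMap

theorem LinearMap.finrank_range_add_finrank_ker_of_isDomain {R M M' : Type*} [CommRing R]
    [IsDomain R] [AddCommGroup M] [Module R M] [AddCommGroup M'] [Module R M']
    [Module.Finite R M] (f : M →ₗ[R] M') :
    finrank R (range f) + finrank R (ker f) = finrank R M := by
  rw [← f.quotKerEquivRange.finrank_eq]
  exact (ker f).finrank_quotient_add_finrank

theorem Submodule.exists_le_ker_sup_span_singleton {R M M' : Type*} [Ring R] [AddCommGroup M]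
    [Module R M] [AddCommGroup M'] [Module R M'] {f : M →ₗ[R] M'} {N : Submodule R M}
    (h : (N.map f).IsPrincipal) : ∃ w ∈ N, N ≤ ker f ⊔ R ∙ w := by
  obtain ⟨⟨y, hy⟩⟩ := h
  obtain ⟨w, hwN, rfl⟩ := mem_map.mp (hy ▸ mem_span_singleton_self y)
  refine ⟨w, hwN, fun x hx => ?_⟩
  obtain ⟨r, hr⟩ := mem_span_singleton.mp (hy ▸ mem_map_of_mem hx : f x ∈ R ∙ f w)
  refine mem_sup.mpr ⟨x - r • w, ?_, r • w, smul_mem _ _ (mem_span_singleton_self w),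
    sub_add_cancel _ _⟩
  rw [mem_ker, map_sub, map_smul, hr, sub_self]

theorem Submodule.finrank_eq_one_of_not_linearIndependent {R M : Type*} [CommRing R] [IsDomain R]
    [IsPrincipalIdealRing R] [AddCommGroup M] [Module R M] [Module.Free R M] [Module.Finite R M]
    {N : Submodule R M} (hN : N ≠ ⊥) (h : ∀ x ∈ N, ∀ y ∈ N, ¬ LinearIndependent R ![x, y]) :
    finrank R N = 1 := by
  obtain ⟨x, hxN, hx⟩ := (Submodule.ne_bot_iff N).mp hN
  refine le_antisymm (not_lt.mp fun hlt => ?_) ?_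
  · obtain ⟨y, hy⟩ := exists_linearIndependent_pair_of_one_lt_finrank hlt
      (x := ⟨x, hxN⟩) (by simpa using hx)
    have := hy.map' N.subtype N.ker_subtype
    exact h x hxN y y.2 (by rwa [show N.subtype ∘ ![⟨x, hxN⟩, y] = ![x, ↑y] by
      ext i; fin_cases i <;> rfl] at this)
  · exact Nat.one_le_iff_ne_zero.mpr fun h0 => hN (Submodule.finrank_eq_zero.mp h0)

end Lattice

section Integral

open Submodule LinearMap

variable {M : Type*} [AddCommGroup M]

theorem Module.Basis.toMatrix_eq_Nmat (b : Basis (Fin 3) ℤ M) {φ : Module.End ℤ M} {a a' : ℤ}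
    (h₀ : φ (b 0) = b 0) (h₁ : φ (b 1) = a • b 0 - b 1) (h₂ : φ (b 2) = a' • b 0 - b 2) :
    LinearMap.toMatrix b b φ = Nmat a a' := by
  ext i j
  fin_cases i <;> fin_cases j <;> simp [LinearMap.toMatrix_apply, h₀, h₁, h₂, Nmat]

theorem Module.Basis.toMatrix_eq_Mmat (b : Basis (Fin 3) ℤ M) {ψ : Module.End ℤ M} {c d : ℤ}
    (h₀ : ψ (b 0) = -b 0) (h₁ : ψ (b 1) = -b 1) (h₂ : ψ (b 2) = c • b 0 + d • b 1 + b 2) :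
    LinearMap.toMatrix b b ψ = Mmat c d := by
  ext i j
  fin_cases i <;> fin_cases j <;> simp [LinearMap.toMatrix_apply, h₀, h₁, h₂, Mmat]

variable [Module.Free ℤ M] [Module.Finite ℤ M]

namespace Module.End.IsEigenvalueOnePair

variable {φ ψ : Module.End ℤ M}

theorem finrank_ker_sub_one_eq_one (h : IsEigenvalueOnePair φ ψ) (hM : finrank ℤ M = 3) :
    finrank ℤ (ker (φ - 1)) = 1 :=
  finrank_eq_one_of_not_linearIndependent (bot_lt_iff_ne_bot.mp
    (bot_lt_ker_of_det_eq_zero (by simpa using h.det_pow_mul_pow_sub_one 1 0)))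
    fun _ hx _ hy =>
      h.not_linearIndependent_int hM (mem_ker_sub_one.mp hx) (mem_ker_sub_one.mp hy)

theorem finrank_range_add_one_eq_one (h : IsEigenvalueOnePair φ ψ) (hM : finrank ℤ M = 3) :
    finrank ℤ (range (ψ + 1)) = 1 := by
  obtain ⟨-, hψ, -⟩ := h.involutive_and_apply_eq_neg_int hM
  have hle : range (ψ + 1) ≤ ker (ψ - 1) := by
    rintro _ ⟨x, rfl⟩
    simp [hψ x, add_comm]
  refine le_antisymm (h.symm.finrank_ker_sub_one_eq_one hM ▸ finrank_mono hle)
    (Nat.one_le_iff_ne_zero.mpr fun h0 => ?_)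
  obtain ⟨x, hx0, hψx⟩ := h.symm.exists_ne_zero_apply_eq_self
  have : (ψ + 1) x = 0 := by simpa using (finrank_eq_zero.mp h0).le (mem_range_self _ x)
  simp [hψx, ← two_smul ℤ x, hx0] at this

theorem exists_top_le_span (h : IsEigenvalueOnePair φ ψ) (hM : finrank ℤ M = 3) :
    ∃ u v w : M, ker (φ - 1) = ℤ ∙ u ∧ ψ v = -v ∧ ker (ψ + 1) ≤ span ℤ {u, v} ∧
      ⊤ ≤ span ℤ (Set.range ![u, v, w]) := by
  obtain ⟨-, -, hneg⟩ := h.involutive_and_apply_eq_neg_int hM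
  have hfix := h.finrank_ker_sub_one_eq_one hM
  have hrange := h.finrank_range_add_one_eq_one hM
  have hK : finrank ℤ (ker (ψ + 1)) = 2 := by
    have := (ψ + 1).finrank_range_add_finrank_ker_of_isDomain
    omega
  obtain ⟨u, hu⟩ : ∃ u, ker (φ - 1) = ℤ ∙ u := by
    have := (finrank_le_one_iff_isPrincipal (ker (φ - 1))).mp hfix.le
    exact ⟨_, (IsPrincipal.span_singleton_generator _).symm⟩
  have hfixK : ker (φ - 1) ≤ ker (ψ + 1) := fun x hx => by simp [hneg x (mem_ker_sub_one.mp hx)]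
  obtain ⟨w, -, hw⟩ := exists_le_ker_sup_span_singleton (f := ψ + 1) (N := ⊤) (by
    rw [Submodule.map_top]
    exact (finrank_le_one_iff_isPrincipal _).mp hrange.le)
  obtain ⟨v, hvK, hv⟩ := exists_le_ker_sup_span_singleton (f := φ - 1) (N := ker (ψ + 1)) (by
    refine (finrank_le_one_iff_isPrincipal _).mp ?_
    have := ((φ - 1).domRestrict (ker (ψ + 1))).finrank_range_add_finrank_ker_of_isDomain
    rw [range_domRestrict, ker_domRestrict, (comapSubtypeEquivOfLe hfixK).finrank_eq, hfix,
      hK] at this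
    omega)
  have huv : ker (ψ + 1) ≤ span ℤ {u, v} := by rwa [span_insert, ← hu]
  refine ⟨u, v, w, hu, eq_neg_of_add_eq_zero_left (by simpa using hvK), huv, ?_⟩
  calc ⊤ ≤ ker (ψ + 1) ⊔ ℤ ∙ w := hw
    _ ≤ span ℤ {u, v} ⊔ ℤ ∙ w := sup_le_sup_right huv _
    _ = span ℤ (Set.range ![u, v, w]) := by simp [span_insert, sup_assoc]; ac_rfl

theorem exists_basis_toMatrix_eq (h : IsEigenvalueOnePair φ ψ) (hM : finrank ℤ M = 3) :
    ∃ (b : Basis (Fin 3) ℤ M) (a a' c d : ℤ),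
      LinearMap.toMatrix b b φ = Nmat a a' ∧ LinearMap.toMatrix b b ψ = Mmat c d := by
  obtain ⟨hφ, hψ, hneg⟩ := h.involutive_and_apply_eq_neg_int hM
  obtain ⟨u, v, w, hu, hv, huv, hspan⟩ := h.exists_top_le_span hM
  let b := basisOfTopLeSpanOfCardEqFinrank ![u, v, w] hspan (by simp [hM])
  obtain ⟨hb₀, hb₁, hb₂⟩ : b 0 = u ∧ b 1 = v ∧ b 2 = w := by simp [b]
  have hφu : φ u = u := mem_ker_sub_one.mp (hu ▸ mem_span_singleton_self u)
  have hφ_add : ∀ x, ∃ a : ℤ, a • u = φ x + x := fun x =>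
    mem_span_singleton.mp (hu ▸ mem_ker_sub_one.mpr (by rw [map_add, hφ x, add_comm]))
  obtain ⟨a, ha⟩ := hφ_add v
  obtain ⟨a', ha'⟩ := hφ_add w
  obtain ⟨c, d, hcd⟩ : ∃ c d : ℤ, c • u + d • v = ψ w - w :=
    mem_span_pair.mp (huv (by simp [hψ w]))
  refine ⟨b, a, a', c, d, b.toMatrix_eq_Nmat ?_ ?_ ?_, b.toMatrix_eq_Mmat ?_ ?_ ?_⟩ <;>
    simp only [hb₀, hb₁, hb₂]
  · exact hφu
  · rw [ha, add_sub_cancel_right]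
  · rw [ha', add_sub_cancel_right]
  · exact hneg u hφu
  · exact hv
  · rw [hcd, sub_add_cancel]

end Module.End.IsEigenvalueOnePair

end Integral

theorem Matrix.GeneralLinearGroup.zpow_mulVec_eq_self {n R : Type*} [Fintype n] [DecidableEq n]
    [CommRing R] {U : GL n R} {x : n → R} (h : (U : Matrix n n R) *ᵥ x = x) (k : ℤ) :
    ((U ^ k : GL n R) : Matrix n n R) *ᵥ x = x := by
  have hinv : ((U⁻¹ : GL n R) : Matrix n n R) *ᵥ x = x := by
    conv_lhs => rw [← h]
    rw [Matrix.mulVec_mulVec, ← Units.val_mul, inv_mul_cancel, Units.val_one, Matrix.one_mulVec]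
  induction k using Int.induction_on with
  | zero => simp
  | succ i ih => rw [_root_.zpow_add_one, Units.val_mul, ← Matrix.mulVec_mulVec, h, ih]
  | pred i ih => rw [_root_.zpow_sub_one, Units.val_mul, ← Matrix.mulVec_mulVec, hinv, ih]

theorem Module.Basis.exists_conj_eq_toMatrix {n R : Type*} [Fintype n] [DecidableEq n]
    [CommRing R] (b : Basis n R (n → R)) :
    ∃ P : GL n R, ∀ X : GL n R,
      ((P⁻¹ * X * P : GL n R) : Matrix n n R) = LinearMap.toMatrix b b (Matrix.toLin' X) := by
  let e := Pi.basisFun R n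
  refine ⟨⟨e.toMatrix b, b.toMatrix e, e.toMatrix_mul_toMatrix_flip b,
    b.toMatrix_mul_toMatrix_flip e⟩, fun X => ?_⟩
  rw [← basis_toMatrix_mul_linearMap_toMatrix_mul_basis_toMatrix b e b e,
    LinearMap.toMatrix_eq_toMatrix', LinearMap.toMatrix'_toLin']
  rfl

theorem normal_form_commuting_pair
    (N M : GL (Fin 3) ℤ)
    (hcomm : N * M = M * N)
    (hspec : ∀ n m : ℤ, (((N ^ n * M ^ m : GL (Fin 3) ℤ) :
      Matrix (Fin 3) (Fin 3) ℤ) - 1).det = 0)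
    (hfix : ∀ k : Fin 3 → ℤ,
      (∀ n m : ℤ, ((N ^ n * M ^ m : GL (Fin 3) ℤ) :
        Matrix (Fin 3) (Fin 3) ℤ).mulVec k = k) → k = 0) :
    ∃ (P : GL (Fin 3) ℤ) (a b c d : ℤ),
      ((P⁻¹ * N * P : GL (Fin 3) ℤ) : Matrix (Fin 3) (Fin 3) ℤ) = Nmat a b ∧
      ((P⁻¹ * M * P : GL (Fin 3) ℤ) : Matrix (Fin 3) (Fin 3) ℤ) = Mmat c d := by
  have h : IsEigenvalueOnePair (Matrix.toLinAlgEquiv' (N : Matrix (Fin 3) (Fin 3) ℤ))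
      (Matrix.toLinAlgEquiv' (M : Matrix (Fin 3) (Fin 3) ℤ)) := by
    refine ⟨(Commute.units_val hcomm).map Matrix.toLinAlgEquiv', fun n m => ?_,
      fun x hNx hMx => hfix x fun n m => ?_⟩
    · rw [← hspec n m, zpow_natCast, zpow_natCast, Units.val_mul, Units.val_pow_eq_pow_val,
        Units.val_pow_eq_pow_val, ← LinearMap.det_toLin']
      congr 1
      -- `toLin'` is `toLinAlgEquiv'` as a map, so the algebra-hom lemmas apply
      show _ = Matrix.toLinAlgEquiv' _
      simp only [map_sub, map_mul, map_pow, map_one]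
    · rw [Units.val_mul, ← Matrix.mulVec_mulVec,
        Matrix.GeneralLinearGroup.zpow_mulVec_eq_self (U := M) (by simpa using hMx),
        Matrix.GeneralLinearGroup.zpow_mulVec_eq_self (U := N) (by simpa using hNx)]
  obtain ⟨b, a, a', c, d, hN, hM⟩ := h.exists_basis_toMatrix_eq (by simp)
  obtain ⟨P, hP⟩ := b.exists_conj_eq_toMatrix
  exact ⟨P, a, a', c, d, (hP N).trans hN, (hP M).trans hM⟩
end

section
/- Let N and M be elements of GL(3,ℤ) such that (i) N·M = M·N, (ii) 1 is an eigenvalue of N^n·M^m for every (n,m) ∈ ℤ², and (iii) the only k ∈ ℤ³ satisfying N^n·M^m·k = k for all (n,m) ∈ ℤ² is k = 0. Then N² = I, M² = I, N ≠ I, M ≠ I, N ≠ M, and the subgroup of GL(3,ℤ) generated by N and M is isomorphic to the Klein four-group ℤ/2 × ℤ/2. -/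
/-!
Over `ℚ`, write `Fix g` for the fixed space of `g`. If `g` and `h` commute and
`Fix g ⊓ Fix h = 0`, then `Fix (g * h)` meets `Fix g ⊔ Fix h` trivially: when `a ∈ Fix g`,
`b ∈ Fix h` and `g h (a + b) = a + b`, the vector `h a - a = b - g b` is fixed by both.
In dimension 3 the three nonzero spaces `Fix N`, `Fix M`, `Fix (N * M)` are therefore lines
spanning `ℚ³`, each invariant under both matrices: `N = diag(1, μ, ε)` and
`M = diag(l, 1, δ)` with `l, μ, ε ≠ 1` and `ε δ = 1`. As
`N ^ n * M ^ m = diag(l ^ m, μ ^ n, ε ^ n δ ^ m)` fixes a nonzero vector, `(n, m) = (2, 1)`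
forces `μ ^ 2 = 1` and then `(3, 1)` forces `ε ^ 2 = 1`, so `N ^ 2 = 1`; by symmetry
`M ^ 2 = 1`. Two distinct commuting involutions generate a Klein four-group.
-/

open Module Module.End Submodule

section Eigenspaces

variable {R M : Type*} [CommRing R] [AddCommGroup M] [Module R M]

theorem mem_eigenspace_one {f : End R M} {x : M} : x ∈ f.eigenspace 1 ↔ f x = x := by
  rw [mem_eigenspace_iff, one_smul]

theorem eq_one_of_eigenspace_one_eq_top {f : End R M} (h : f.eigenspace 1 = ⊤) : f = 1 := by
  ext x
  exact mem_eigenspace_one.1 (h ▸ mem_top)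

theorem eigenspace_le_eigenspace_pow (f : End R M) (c : R) (k : ℕ) :
    f.eigenspace c ≤ (f ^ k).eigenspace (c ^ k) := by
  intro x hx
  rw [mem_eigenspace_iff] at hx ⊢
  induction k with
  | zero => simp
  | succ k ih => rw [pow_succ, mul_apply, hx, map_smul, ih, smul_smul, pow_succ, mul_comm]

theorem eigenspace_inf_eigenspace_le_eigenspace_mul (A B : End R M) (a b : R) :
    A.eigenspace a ⊓ B.eigenspace b ≤ (A * B).eigenspace (a * b) := by
  intro x hx
  obtain ⟨hA, hB⟩ := mem_inf.1 hx
  rw [mem_eigenspace_iff] at hA hB ⊢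
  rw [mul_apply, hB, map_smul, hA, smul_smul, mul_comm]

theorem le_eigenspace_pow_mul_pow {L : Submodule R M} {A B : End R M} {a b : R}
    (hA : L ≤ A.eigenspace a) (hB : L ≤ B.eigenspace b) (n m : ℕ) :
    L ≤ (A ^ n * B ^ m).eigenspace (a ^ n * b ^ m) :=
  (le_inf (hA.trans (eigenspace_le_eigenspace_pow A a n))
    (hB.trans (eigenspace_le_eigenspace_pow B b m))).trans
    (eigenspace_inf_eigenspace_le_eigenspace_mul _ _ _ _)

theorem disjoint_sup_eigenspace_one_mul {g h : End R M} (hgh : Commute g h)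
    (hd : Disjoint (g.eigenspace 1) (h.eigenspace 1)) :
    Disjoint (g.eigenspace 1 ⊔ h.eigenspace 1) ((g * h).eigenspace 1) := by
  rw [disjoint_def]
  rintro _ hw hghw
  obtain ⟨a, ha, b, hb, rfl⟩ := mem_sup.1 hw
  have hha : h a ∈ g.eigenspace 1 := mapsTo_genEigenspace_of_comm hgh 1 1 ha
  have hgb : g b ∈ h.eigenspace 1 := mapsTo_genEigenspace_of_comm hgh.symm 1 1 hb
  rw [mem_eigenspace_one] at ha hb hghw
  have hga : g (h a) = h a := by rw [← mul_apply, hgh.eq, mul_apply, ha]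
  rw [mul_apply, map_add, map_add, hga, hb] at hghw
  have hsub : h a - a = b - g b := by rw [sub_eq_sub_iff_add_eq_add, hghw, add_comm]
  have hcommon : h a - a ∈ g.eigenspace 1 ⊓ h.eigenspace 1 :=
    ⟨sub_mem hha (mem_eigenspace_one.2 ha), hsub ▸ sub_mem (mem_eigenspace_one.2 hb) hgb⟩
  rw [hd.eq_bot, mem_bot] at hcommon
  have ha0 : a = 0 := disjoint_def.1 hd a (mem_eigenspace_one.2 ha)
    (mem_eigenspace_one.2 (sub_eq_zero.1 hcommon))
  have hb0 : b = 0 := disjoint_def.1 hd b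
    (mem_eigenspace_one.2 (sub_eq_zero.1 (hsub ▸ hcommon)).symm) (mem_eigenspace_one.2 hb)
  rw [ha0, hb0, add_zero]

end Eigenspaces

section ThreeLines

variable {K V : Type*} [Field K] [AddCommGroup V] [Module K V]

theorem finrank_eq_one_of_disjoint_of_finrank_eq_three {p q r : Submodule K V}
    (hV : finrank K V = 3) (hpq : Disjoint p q) (hpqr : Disjoint (p ⊔ q) r)
    (hp : p ≠ ⊥) (hq : q ≠ ⊥) (hr : r ≠ ⊥) :
    finrank K p = 1 ∧ finrank K q = 1 ∧ finrank K r = 1 ∧ p ⊔ q ⊔ r = ⊤ := by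
  have : FiniteDimensional K V := Module.finite_of_finrank_pos (by omega)
  have h₁ := finrank_sup_add_finrank_inf_eq p q
  have h₂ := finrank_sup_add_finrank_inf_eq (p ⊔ q) r
  rw [hpq.eq_bot, finrank_bot] at h₁
  rw [hpqr.eq_bot, finrank_bot] at h₂
  have hle := (p ⊔ q ⊔ r).finrank_le
  have hp' := mt finrank_eq_zero.1 hp
  have hq' := mt finrank_eq_zero.1 hq
  have hr' := mt finrank_eq_zero.1 hr
  exact ⟨by omega, by omega, by omega, eq_top_of_finrank_eq (by omega)⟩

theorem exists_le_eigenspace_of_finrank_eq_one {p : Submodule K V} (hp : finrank K p = 1)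
    {f : End K V} (hf : Set.MapsTo f p p) : ∃ c : K, p ≤ f.eigenspace c := by
  obtain ⟨c, hc, -⟩ := (f.restrict hf).existsUnique_eq_smul_id_of_finrank_eq_one hp
  exact ⟨c, fun x hx =>
    mem_eigenspace_iff.2 (congr_arg Subtype.val (LinearMap.congr_fun hc ⟨x, hx⟩))⟩

theorem mul_eq_of_le_eigenspace {L : Submodule K V} (hL : L ≠ ⊥) {A B : End K V} {a b c : K}
    (hA : L ≤ A.eigenspace a) (hB : L ≤ B.eigenspace b) (hc : L ≤ (A * B).eigenspace c) :
    a * b = c := by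
  by_contra h
  have hab := (le_inf hA hB).trans (eigenspace_inf_eigenspace_le_eigenspace_mul A B a b)
  exact hL (eq_bot_iff.2 ((le_inf hab hc).trans ((A * B).disjoint_genEigenspace h 1 1).le_bot))

theorem eq_one_of_eigenspace_one_ne_bot {p q r : Submodule K V} (hpq : Disjoint p q)
    (hpqr : Disjoint (p ⊔ q) r) (htop : p ⊔ q ⊔ r = ⊤) {g : End K V} {a b c : K}
    (ha : p ≤ g.eigenspace a) (hb : q ≤ g.eigenspace b) (hc : r ≤ g.eigenspace c)
    (hg : g.eigenspace 1 ≠ ⊥) : a = 1 ∨ b = 1 ∨ c = 1 := by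
  obtain ⟨w, hw, hw0⟩ := exists_mem_ne_zero_of_ne_bot hg
  obtain ⟨_, hxy, z, hz, rfl⟩ := mem_sup.1 (htop ▸ mem_top : w ∈ p ⊔ q ⊔ r)
  obtain ⟨x, hx, y, hy, rfl⟩ := mem_sup.1 hxy
  rw [mem_eigenspace_one, map_add, map_add, mem_eigenspace_iff.1 (ha hx),
    mem_eigenspace_iff.1 (hb hy), mem_eigenspace_iff.1 (hc hz)] at hw
  have hsum : ((a - 1) • x + (b - 1) • y) + (c - 1) • z = 0 := by
    linear_combination (norm := module) hw
  obtain ⟨hxy0, hz0⟩ := disjoint_iff_add_eq_zero.1 hpqr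
    (add_mem_sup (smul_mem p _ hx) (smul_mem q _ hy)) (smul_mem r _ hz) hsum
  obtain ⟨hx0, hy0⟩ := disjoint_iff_add_eq_zero.1 hpq (smul_mem p _ hx) (smul_mem q _ hy) hxy0
  by_contra! h
  simp only [smul_eq_zero, sub_eq_zero, h, false_or] at hx0 hy0 hz0
  exact hw0 (by rw [hx0, hy0, hz0, add_zero, add_zero])

end ThreeLines

theorem sq_eq_one_of_forall_pow_eq_one {G : Type*} [CommMonoid G] {l μ ε δ : G}
    (hεδ : ε * δ = 1) (hl : l ≠ 1) (hμ : μ ≠ 1) (hε : ε ≠ 1)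
    (h : ∀ n m : ℕ, l ^ m = 1 ∨ μ ^ n = 1 ∨ ε ^ n * δ ^ m = 1) :
    μ ^ 2 = 1 ∧ ε ^ 2 = 1 := by
  have hμ2 : μ ^ 2 = 1 := by
    have h21 : ε ^ 2 * δ = ε := by rw [sq, mul_assoc, hεδ, mul_one]
    simpa [hl, h21, hε] using h 2 1
  have h31 : ε ^ 3 * δ = ε ^ 2 := by rw [pow_succ, mul_assoc, hεδ, mul_one]
  have hμ3 : μ ^ 3 = μ := by rw [pow_succ, hμ2, one_mul]
  exact ⟨hμ2, by simpa [hl, h31, hμ3, hμ] using h 3 1⟩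

section CommutingPair

variable {K V : Type*} [Field K] [AddCommGroup V] [Module K V]

theorem sq_eq_one_of_forall_eigenspace_one_ne_bot {A B : End K V} (hAB : Commute A B)
    (hV : finrank K V = 3) (hfix : ∀ n m : ℕ, (A ^ n * B ^ m).eigenspace 1 ≠ ⊥)
    (hd : Disjoint (A.eigenspace 1) (B.eigenspace 1)) : A ^ 2 = 1 := by
  set P := A.eigenspace 1
  set Q := B.eigenspace 1
  set R := (A * B).eigenspace 1
  have hP : P ≠ ⊥ := by simpa using hfix 1 0
  have hQ : Q ≠ ⊥ := by simpa using hfix 0 1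
  have hR : R ≠ ⊥ := by simpa using hfix 1 1
  have hPQR := disjoint_sup_eigenspace_one_mul hAB hd
  obtain ⟨hP1, hQ1, hR1, htop⟩ :=
    finrank_eq_one_of_disjoint_of_finrank_eq_three hV hd hPQR hP hQ hR
  obtain ⟨l, hBP⟩ := exists_le_eigenspace_of_finrank_eq_one hP1
    (mapsTo_genEigenspace_of_comm hAB 1 1)
  obtain ⟨μ, hAQ⟩ := exists_le_eigenspace_of_finrank_eq_one hQ1
    (mapsTo_genEigenspace_of_comm hAB.symm 1 1)
  obtain ⟨ε, hAR⟩ := exists_le_eigenspace_of_finrank_eq_one hR1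
    (mapsTo_genEigenspace_of_comm ((Commute.refl A).mul_left hAB.symm) 1 1)
  obtain ⟨δ, hBR⟩ := exists_le_eigenspace_of_finrank_eq_one hR1
    (mapsTo_genEigenspace_of_comm (hAB.mul_left (Commute.refl B)) 1 1)
  have hl : l ≠ 1 := by
    rintro rfl
    exact hP (hd.eq_bot_of_le hBP)
  have hμ : μ ≠ 1 := by
    rintro rfl
    exact hQ (hd.symm.eq_bot_of_le hAQ)
  have hε : ε ≠ 1 := by
    rintro rfl
    exact hR (hPQR.symm.eq_bot_of_le (hAR.trans le_sup_left))
  have hεδ : ε * δ = 1 := mul_eq_of_le_eigenspace hR hAR hBR le_rfl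
  obtain ⟨hμ2, hε2⟩ := sq_eq_one_of_forall_pow_eq_one hεδ hl hμ hε fun n m => by
    simpa using eq_one_of_eigenspace_one_ne_bot hd hPQR htop
      (le_eigenspace_pow_mul_pow le_rfl hBP n m) (le_eigenspace_pow_mul_pow hAQ le_rfl n m)
      (le_eigenspace_pow_mul_pow hAR hBR n m) (hfix n m)
  have hsq : ∀ {L : Submodule K V} {c : K}, c ^ 2 = 1 → L ≤ A.eigenspace c →
      L ≤ (A ^ 2).eigenspace 1 :=
    fun hc hL => hc ▸ hL.trans (eigenspace_le_eigenspace_pow A _ 2)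
  exact eq_one_of_eigenspace_one_eq_top <| top_unique <| htop ▸
    sup_le (sup_le (hsq (one_pow 2) le_rfl) (hsq hμ2 hAQ)) (hsq hε2 hAR)

theorem sq_eq_one_and_ne_of_forall_eigenspace_one_ne_bot {A B : End K V} (hAB : Commute A B)
    (hV : finrank K V = 3) (hfix : ∀ n m : ℕ, (A ^ n * B ^ m).eigenspace 1 ≠ ⊥)
    (hd : Disjoint (A.eigenspace 1) (B.eigenspace 1)) :
    A ^ 2 = 1 ∧ B ^ 2 = 1 ∧ A ≠ 1 ∧ B ≠ 1 ∧ A ≠ B := by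
  have hA : A.eigenspace 1 ≠ ⊥ := by simpa using hfix 1 0
  have hB : B.eigenspace 1 ≠ ⊥ := by simpa using hfix 0 1
  have hle_one : ∀ L : Submodule K V, L ≤ (1 : End K V).eigenspace 1 :=
    fun L x _ => mem_eigenspace_one.2 rfl
  refine ⟨sq_eq_one_of_forall_eigenspace_one_ne_bot hAB hV hfix hd,
    sq_eq_one_of_forall_eigenspace_one_ne_bot hAB.symm hV
      (fun n m => (hAB.pow_pow m n).eq ▸ hfix m n) hd.symm, ?_, ?_, ?_⟩
  · rintro rfl
    exact hB (hd.eq_bot_of_ge (hle_one _))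
  · rintro rfl
    exact hA (hd.symm.eq_bot_of_ge (hle_one _))
  · rintro rfl
    exact hA (disjoint_self.1 hd)

end CommutingPair

theorem exists_intCast_eq_smul {n : Type*} [Finite n] (x : n → ℚ) :
    ∃ d : ℤ, d ≠ 0 ∧ ∃ k : n → ℤ, (fun i => (k i : ℚ)) = d • x := by
  obtain ⟨⟨d, hd⟩, hk⟩ :=
    IsLocalization.exist_integer_multiples_of_finite (nonZeroDivisors ℤ) x
  choose k hk using hk
  exact ⟨d, nonZeroDivisors.ne_zero hd, k, funext hk⟩

section IntegerMatrices

open Matrix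

variable {n : Type*} [Fintype n] [DecidableEq n]

noncomputable def toRatEnd : GL n ℤ →* End ℚ (n → ℚ) :=
  (toLinAlgEquiv' : Matrix n n ℚ ≃ₐ[ℚ] End ℚ (n → ℚ)).toMonoidHom.comp
    ((Int.castRingHom ℚ).mapMatrix.toMonoidHom.comp (Units.coeHom _))

theorem toRatEnd_injective : Function.Injective (toRatEnd (n := n)) := by
  intro g h hgh
  ext i j
  simpa using congr_fun (congr_fun (toLin'.injective hgh) i) j

theorem eigenspace_one_toRatEnd_ne_bot {g : GL n ℤ} (h : ((g : Matrix n n ℤ) - 1).det = 0) :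
    (toRatEnd g).eigenspace 1 ≠ ⊥ := by
  rw [eigenspace_def, one_smul, ← LinearMap.det_eq_zero_iff_ker_ne_bot]
  have : toRatEnd g - 1 =
      toLinAlgEquiv' ((Int.castRingHom ℚ).mapMatrix ((g : Matrix n n ℤ) - 1)) := by
    rw [map_sub, map_one, map_sub, map_one]
    rfl
  rw [this]
  exact (LinearMap.det_toLin' _).trans (by rw [← RingHom.map_det, h, map_zero])

theorem mulVec_eq_self_of_mem_eigenspace_one_toRatEnd {g : GL n ℤ} {x : n → ℚ} {d : ℤ}
    {k : n → ℤ} (hx : x ∈ (toRatEnd g).eigenspace 1) (hk : (fun i => (k i : ℚ)) = d • x) :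
    (g : Matrix n n ℤ) *ᵥ k = k := by
  have h : toRatEnd g (fun i => (k i : ℚ)) = fun i => (k i : ℚ) := by
    rw [hk, map_zsmul, (mem_eigenspace_iff.1 hx).trans (one_smul ℚ x)]
  funext i
  simpa using (RingHom.map_mulVec (Int.castRingHom ℚ) _ k i).trans (congr_fun h i)

theorem mulVec_zpow_mul_zpow_eq_self {R : Type*} [CommRing R] {g h : GL n R} {k : n → R}
    (hg : (g : Matrix n n R) *ᵥ k = k) (hh : (h : Matrix n n R) *ᵥ k = k) (a b : ℤ) :
    ((g ^ a * h ^ b : GL n R) : Matrix n n R) *ᵥ k = k := by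
  let S : Subgroup (GL n R) :=
    (MulAction.stabilizer (LinearMap.GeneralLinearGroup R (n → R)) k).comap
      GeneralLinearGroup.toLin.toMonoidHom
  have hS : ∀ x, x ∈ S ↔ (x : Matrix n n R) *ᵥ k = k := fun x => by
    simp [S, MulAction.mem_stabilizer_iff, Units.smul_def]
  exact (hS _).1 (mul_mem (zpow_mem ((hS g).2 hg) a) (zpow_mem ((hS h).2 hh) b))

theorem disjoint_eigenspace_one_toRatEnd {N M : GL n ℤ}
    (hfix : ∀ k : n → ℤ,
      (∀ a b : ℤ, ((N ^ a * M ^ b : GL n ℤ) : Matrix n n ℤ) *ᵥ k = k) → k = 0) :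
    Disjoint ((toRatEnd N).eigenspace 1) ((toRatEnd M).eigenspace 1) := by
  rw [disjoint_def]
  intro x hN hM
  obtain ⟨d, hd, k, hk⟩ := exists_intCast_eq_smul x
  have hk0 := hfix k (mulVec_zpow_mul_zpow_eq_self
    (mulVec_eq_self_of_mem_eigenspace_one_toRatEnd hN hk)
    (mulVec_eq_self_of_mem_eigenspace_one_toRatEnd hM hk))
  have hdx : d • x = 0 := by
    rw [← hk, hk0]
    exact funext fun _ => Int.cast_zero
  exact (smul_eq_zero.1 hdx).resolve_left hd

end IntegerMatrices

section KleinFour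

variable {G : Type*} [Group G] {a b : G}

theorem Subgroup.coe_closure_pair_of_sq_eq_one (hab : Commute a b) (ha : a ^ 2 = 1)
    (hb : b ^ 2 = 1) : (Subgroup.closure {a, b} : Set G) = {1, a, b, a * b} := by
  have haa : a * a = 1 := by rw [← sq, ha]
  have hbb : b * b = 1 := by rw [← sq, hb]
  have ha' : a⁻¹ = a := inv_eq_of_mul_eq_one_right haa
  have hb' : b⁻¹ = b := inv_eq_of_mul_eq_one_right hbb
  have hmul : ∀ x ∈ ({a, b} : Set G), ∀ y ∈ ({1, a, b, a * b} : Set G),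
      x * y ∈ ({1, a, b, a * b} : Set G) := by
    have haab : a * (a * b) = b := by rw [← mul_assoc, haa, one_mul]
    have hbab : b * (a * b) = a := by rw [← mul_assoc, ← hab.eq, mul_assoc, hbb, mul_one]
    rintro x (rfl | rfl) y (rfl | rfl | rfl | rfl) <;> simp [haa, hbb, haab, hbab, hab.eq.symm]
  ext x
  refine ⟨fun hx => ?_, ?_⟩
  · induction hx using Subgroup.closure_induction_left with
    | one => simp
    | mul_left x hx y _ hy => exact hmul x hx y hy
    | inv_mul_cancel x hx y _ hy =>
      have hinv : x⁻¹ = x := by rcases hx with rfl | rfl; exacts [ha', hb']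
      rw [hinv]
      exact hmul x hx y hy
  · have hamem : a ∈ Subgroup.closure {a, b} := Subgroup.subset_closure (by simp)
    have hbmem : b ∈ Subgroup.closure {a, b} := Subgroup.subset_closure (by simp)
    rintro (rfl | rfl | rfl | rfl)
    exacts [one_mem _, hamem, hbmem, mul_mem hamem hbmem]

theorem Subgroup.isKleinFour_closure_pair (hab : Commute a b) (ha : a ^ 2 = 1) (hb : b ^ 2 = 1)
    (ha1 : a ≠ 1) (hb1 : b ≠ 1) (hne : a ≠ b) : IsKleinFour (Subgroup.closure {a, b}) where
  card_four := by
    have hab1 : a * b ≠ 1 := fun h => hne (by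
      rw [eq_inv_of_mul_eq_one_left h, inv_eq_of_mul_eq_one_right (by rw [← sq, hb])])
    rw [← SetLike.coe_sort_coe, Nat.card_coe_set_eq, coe_closure_pair_of_sq_eq_one hab ha hb,
      Set.ncard_insert_of_notMem, Set.ncard_insert_of_notMem, Set.ncard_pair]
    all_goals simp [hne, ha1, hb1, ha1.symm, hb1.symm, hab1.symm]
  exponent_two := by
    have : Nontrivial (Subgroup.closure {a, b}) := (Subgroup.nontrivial_iff_ne_bot _).2 fun h =>
      ha1 ((Subgroup.mem_bot).1 (h ▸ Subgroup.subset_closure (by simp)))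
    rw [Monoid.exponent_eq_prime_iff Nat.prime_two]
    intro g hg
    have : Fact (Nat.Prime 2) := ⟨Nat.prime_two⟩
    refine orderOf_eq_prime ?_ hg
    have hg' := g.2
    rw [← SetLike.mem_coe, coe_closure_pair_of_sq_eq_one hab ha hb] at hg'
    simp only [Set.mem_insert_iff, Set.mem_singleton_iff] at hg'
    apply Subtype.ext
    rcases hg' with h | h | h | h <;> simp [h, ha, hb, hab.mul_pow]

end KleinFour

theorem klein_four_structure_commuting_pair
    (N M : GL (Fin 3) ℤ)
    (hcomm : N * M = M * N)
    (hspec : ∀ n m : ℤ, (((N ^ n * M ^ m : GL (Fin 3) ℤ) :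
      Matrix (Fin 3) (Fin 3) ℤ) - 1).det = 0)
    (hfix : ∀ k : Fin 3 → ℤ,
      (∀ n m : ℤ, ((N ^ n * M ^ m : GL (Fin 3) ℤ) :
        Matrix (Fin 3) (Fin 3) ℤ).mulVec k = k) → k = 0) :
    N ^ 2 = 1 ∧ M ^ 2 = 1 ∧ N ≠ 1 ∧ M ≠ 1 ∧ N ≠ M ∧
      Nonempty (↥(Subgroup.closure {N, M} : Subgroup (GL (Fin 3) ℤ)) ≃*
        Multiplicative (ZMod 2) × Multiplicative (ZMod 2)) := by
  have hNM : Commute N M := hcomm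
  obtain ⟨hN2, hM2, hN1, hM1, hne⟩ := sq_eq_one_and_ne_of_forall_eigenspace_one_ne_bot
    (hNM.map toRatEnd) (by simp)
    (fun a b => by simpa using eigenspace_one_toRatEnd_ne_bot (hspec a b))
    (disjoint_eigenspace_one_toRatEnd hfix)
  have hN2' : N ^ 2 = 1 := toRatEnd_injective (by rw [map_pow, hN2, map_one])
  have hM2' : M ^ 2 = 1 := toRatEnd_injective (by rw [map_pow, hM2, map_one])
  have hN1' : N ≠ 1 := fun h => hN1 (h ▸ map_one toRatEnd)
  have hM1' : M ≠ 1 := fun h => hM1 (h ▸ map_one toRatEnd)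
  have hne' : N ≠ M := fun h => hne (congrArg toRatEnd h)
  have := Subgroup.isKleinFour_closure_pair hNM hN2' hM2' hN1' hM1' hne'
  obtain ⟨e⟩ := IsKleinFour.nonempty_mulEquiv (G₁ := Subgroup.closure {N, M})
    (G₂ := Multiplicative (ZMod 2 × ZMod 2))
  exact ⟨hN2', hM2', hN1', hM1', hne', ⟨e.trans (MulEquiv.prodMultiplicative _ _)⟩⟩
end

section
/- Let N and M be invertible complex 3×3 matrices such that N·M = M·N, each of the kernels ker(N − I), ker(M − I), and ker(N·M − I) is a nonzero subspace of ℂ³, and ker(N − I) ∩ ker(M − I) = {0}. Then each of ker(N − I), ker(M − I), and ker(N·M − I) has dimension one, these three subspaces are pairwise independent and span ℂ³, i.e. ℂ³ = ker(N − I) ⊕ ker(M − I) ⊕ ker(N·M − I) as an internal direct sum. -/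
/-!
Write `f = toLin' N`, `g = toLin' M` and `Fix h = ker (h - 1)`. If `w = u + v ∈ Fix (f g)` with
`u ∈ Fix f`, `v ∈ Fix g`, then `g u - u = v - f v`; as `f` and `g` commute, the left side lies in
`Fix f` and the right side in `Fix g`, so both vanish, `u ∈ Fix f ∩ Fix g = 0` and likewise `v = 0`.
Hence the three fixed spaces are independent, and three independent nonzero subspaces of `ℂ³`
are lines spanning it.
-/

open Module

lemma iSupIndep_fin_three_of_disjoint {α : Type*} [CompleteLattice α] [IsModularLattice α]
    {a b c : α} (hab : Disjoint a b) (hc : Disjoint c (a ⊔ b)) : iSupIndep ![a, b, c] := by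
  refine iSupIndep_fin_three.mpr ⟨?_, ?_, ?_⟩
  · exact hab.disjoint_sup_right_of_disjoint_sup_left hc.symm
  · rw [sup_comm]
    exact hab.symm.disjoint_sup_right_of_disjoint_sup_left (sup_comm a b ▸ hc.symm)
  · simpa using hc

section

variable {K V ι : Type*} [DivisionRing K] [AddCommGroup V] [Module K V] [FiniteDimensional K V]
  [Fintype ι] [DecidableEq ι] {t : ι → Submodule K V}

theorem iSupIndep.finrank_iSup (ht : iSupIndep t) :
    finrank K ↥(⨆ i, t i) = ∑ i, finrank K (t i) := by
  rw [← DirectSum.range_coeLinearMap,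
    LinearMap.finrank_range_of_inj (f := DirectSum.coeLinearMap t) ht.dfinsupp_lsum_injective,
    finrank_directSum]

theorem iSupIndep.isInternal_of_card_eq_finrank (ht : iSupIndep t)
    (hne : ∀ i, t i ≠ ⊥) (hcard : Fintype.card ι = finrank K V) :
    (∀ i, finrank K (t i) = 1) ∧ DirectSum.IsInternal t := by
  have hpos : ∀ i ∈ Finset.univ, 1 ≤ finrank K (t i) := fun i _ =>
    Nat.one_le_iff_ne_zero.mpr (Submodule.finrank_eq_zero.not.mpr (hne i))
  have hle : ∑ i, finrank K (t i) ≤ ∑ _i : ι, 1 := by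
    rw [← ht.finrank_iSup, Finset.sum_const, Finset.card_univ, smul_eq_mul, mul_one, hcard]
    exact Submodule.finrank_le _
  have hsum : ∑ _i : ι, 1 = ∑ i, finrank K (t i) := le_antisymm (Finset.sum_le_sum hpos) hle
  have hone : ∀ i, finrank K (t i) = 1 := fun i =>
    ((Finset.sum_eq_sum_iff_of_le hpos).mp hsum i (Finset.mem_univ i)).symm
  refine ⟨hone, DirectSum.isInternal_submodule_of_iSupIndep_of_iSup_eq_top ht ?_⟩
  apply Submodule.eq_top_of_finrank_eq
  simp [ht.finrank_iSup, hone, hcard]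

end

namespace Module.End

variable {R V : Type*} [Ring R] [AddCommGroup V] [Module R V]

lemma mem_ker_sub_one_s4 {f : End R V} {v : V} : v ∈ LinearMap.ker (f - 1) ↔ f v = v := by
  simp [sub_eq_zero]

lemma apply_mem_ker_sub_one_of_commute {f g : End R V} (hfg : Commute f g) {v : V}
    (hv : v ∈ LinearMap.ker (f - 1)) : g v ∈ LinearMap.ker (f - 1) := by
  rw [mem_ker_sub_one_s4] at hv ⊢
  rw [← mul_apply, hfg.eq, mul_apply, hv]

theorem disjoint_ker_mul_sub_one_sup {f g : End R V} (hfg : Commute f g)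
    (h : Disjoint (LinearMap.ker (f - 1)) (LinearMap.ker (g - 1))) :
    Disjoint (LinearMap.ker (f * g - 1)) (LinearMap.ker (f - 1) ⊔ LinearMap.ker (g - 1)) := by
  rw [Submodule.disjoint_def]
  intro w hw hw'
  obtain ⟨u, hu, v, hv, rfl⟩ := Submodule.mem_sup.mp hw'
  have hu' := mem_ker_sub_one_s4.mp hu
  have hv' := mem_ker_sub_one_s4.mp hv
  have hsum : g u + f v = u + v := by
    have hfgu : (f * g) u = g u := by rw [hfg.eq, mul_apply, hu']
    have hfgv : (f * g) v = f v := by rw [mul_apply, hv']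
    rw [← hfgu, ← hfgv, ← map_add, mem_ker_sub_one_s4.mp hw]
  have hdiff : g u - u = v - f v := by rw [sub_eq_sub_iff_add_eq_add, hsum, add_comm]
  have hzero : g u - u = 0 := by
    refine Submodule.disjoint_def.mp h _ (sub_mem (apply_mem_ker_sub_one_of_commute hfg hu) hu) ?_
    rw [hdiff]
    exact sub_mem hv (apply_mem_ker_sub_one_of_commute hfg.symm hv)
  have hu0 : u = 0 := Submodule.disjoint_def.mp h u hu (mem_ker_sub_one_s4.mpr (sub_eq_zero.mp hzero))
  have hv0 : v = 0 := by
    refine Submodule.disjoint_def.mp h v (mem_ker_sub_one_s4.mpr ?_) hv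
    rw [hdiff, sub_eq_zero] at hzero
    exact hzero.symm
  rw [hu0, hv0, add_zero]

end Module.End

open Matrix

theorem kernel_direct_sum_decomposition_general
    (N M : Matrix (Fin 3) (Fin 3) ℂ)
    (hcomm : N * M = M * N)
    (hkN : LinearMap.ker (Matrix.toLin' (N - 1)) ≠ ⊥)
    (hkM : LinearMap.ker (Matrix.toLin' (M - 1)) ≠ ⊥)
    (hkNM : LinearMap.ker (Matrix.toLin' (N * M - 1)) ≠ ⊥)
    (hint : LinearMap.ker (Matrix.toLin' (N - 1)) ⊓
      LinearMap.ker (Matrix.toLin' (M - 1)) = ⊥) :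
    Module.finrank ℂ (LinearMap.ker (Matrix.toLin' (N - 1))) = 1 ∧
    Module.finrank ℂ (LinearMap.ker (Matrix.toLin' (M - 1))) = 1 ∧
    Module.finrank ℂ (LinearMap.ker (Matrix.toLin' (N * M - 1))) = 1 ∧
    DirectSum.IsInternal
      ![LinearMap.ker (Matrix.toLin' (N - 1)),
        LinearMap.ker (Matrix.toLin' (M - 1)),
        LinearMap.ker (Matrix.toLin' (N * M - 1))] := by
  have hfg : Commute (toLin' N) (toLin' M) := (show Commute N M from hcomm).map toLinAlgEquiv'
  have hsub_one (A : Matrix (Fin 3) (Fin 3) ℂ) : toLin' (A - 1) = toLin' A - 1 := by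
    rw [map_sub, toLin'_one, Module.End.one_eq_id]
  have hmul : toLin' (N * M) = toLin' N * toLin' M := toLin'_mul N M
  simp only [hsub_one, hmul] at hkN hkM hkNM hint
  rw [hsub_one, hsub_one, hsub_one, hmul]
  have hdisj := disjoint_iff.mpr hint
  obtain ⟨hone, hsum⟩ :=
    (iSupIndep_fin_three_of_disjoint hdisj (End.disjoint_ker_mul_sub_one_sup hfg hdisj)
      ).isInternal_of_card_eq_finrank (by intro i; fin_cases i <;> assumption) (by simp)
  exact ⟨hone 0, hone 1, hone 2, hsum⟩

theorem kernel_direct_sum_decomposition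
    (N M : Matrix (Fin 3) (Fin 3) ℂ)
    (hN : IsUnit N.det) (hM : IsUnit M.det)
    (hcomm : N * M = M * N)
    (hkN : LinearMap.ker (Matrix.toLin' (N - 1)) ≠ ⊥)
    (hkM : LinearMap.ker (Matrix.toLin' (M - 1)) ≠ ⊥)
    (hkNM : LinearMap.ker (Matrix.toLin' (N * M - 1)) ≠ ⊥)
    (hint : LinearMap.ker (Matrix.toLin' (N - 1)) ⊓
      LinearMap.ker (Matrix.toLin' (M - 1)) = ⊥) :
    Module.finrank ℂ (LinearMap.ker (Matrix.toLin' (N - 1))) = 1 ∧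
    Module.finrank ℂ (LinearMap.ker (Matrix.toLin' (M - 1))) = 1 ∧
    Module.finrank ℂ (LinearMap.ker (Matrix.toLin' (N * M - 1))) = 1 ∧
    DirectSum.IsInternal
      ![LinearMap.ker (Matrix.toLin' (N - 1)),
        LinearMap.ker (Matrix.toLin' (M - 1)),
        LinearMap.ker (Matrix.toLin' (N * M - 1))] :=
  kernel_direct_sum_decomposition_general N M hcomm hkN hkM hkNM hint
end

section
/- Let N and M be elements of GL(3,ℤ) such that (i) N·M = M·N, (ii) 1 is an eigenvalue of N^n·M^m for every (n,m) ∈ ℤ², and (iii) the only k ∈ ℤ³ satisfying N^n·M^m·k = k for all (n,m) ∈ ℤ² is k = 0. If G is an abelian subgroup of GL(3,ℤ) containing N and M such that 1 is an eigenvalue of every element of G, then G equals the subgroup of GL(3,ℤ) generated by N and M. -/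
/-!
Everything happens in `GL(3, ℚ)`. A rational eigenvalue of an integral unimodular matrix is an
algebraic integer whose inverse is one too, hence `±1`; and commuting matrices preserve each
other's fixed spaces. If the fixed space of `N` contained a plane, `M` would fix a line `ℚ w`
complementary to it, `N` would act on `w` by `-1`, and `N M` would fix no vector. So the fixed
spaces of `N`, `M` and `N M` are lines `ℚ v`, `ℚ w`, `ℚ u`, and in the basis `(v, w, u)` the
matrices `N` and `M` are `diag(1, -1, -1)` and `diag(-1, 1, -1)`. Every `g ∈ G` preserves these
lines, acting on each by `±1`; after multiplication by one of `1, N, M, N M` it fixes `v` and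
`w`, and since `g N M` still fixes a vector, `g` fixes `u` as well, i.e. `g ∈ ⟨N, M⟩`.
-/

open Matrix

def Matrix.NoCommonFixedVector {n R : Type*} [Fintype n] [Semiring R] (X Y : Matrix n n R) :
    Prop :=
  ∀ x, X *ᵥ x = x → Y *ᵥ x = x → x = 0

namespace Matrix.NoCommonFixedVector

variable {n R : Type*} [Fintype n] [Semiring R] {X Y : Matrix n n R}

theorem symm (h : NoCommonFixedVector X Y) : NoCommonFixedVector Y X :=
  fun x hY hX ↦ h x hX hY

theorem mul_right (h : NoCommonFixedVector X Y) : NoCommonFixedVector (X * Y) Y :=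
  fun x hXY hY ↦ h x (by rwa [← mulVec_mulVec, hY] at hXY) hY

end Matrix.NoCommonFixedVector

section LinearAlgebra

variable {K n : Type*} [Field K] [Fintype n]

theorem eq_zero_of_eq_neg [NeZero (2 : K)] {V : Type*} [AddCommGroup V] [Module K V] {x : V}
    (h : x = -x) : x = 0 := by
  have : (2 : K) • x = 0 := by rw [two_smul]; nth_rewrite 2 [h]; exact add_neg_cancel x
  exact (smul_eq_zero.1 this).resolve_left two_ne_zero

theorem exists_eq_smul_add_smul_add_smul {v v' w : Fin 3 → K}
    (hind : LinearIndependent K ![v, v']) (hw : w ∉ Submodule.span K {v, v'}) (x : Fin 3 → K) :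
    ∃ c s t : K, c • w + (s • v + t • v') = x := by
  have hli : LinearIndependent K ![w, v, v'] := by
    refine linearIndependent_finCons.2 ⟨hind, ?_⟩
    simpa [Matrix.range_cons, Set.pair_comm] using hw
  let β := basisOfLinearIndependentOfCardEqFinrank hli (by simp)
  refine ⟨β.repr x 0, β.repr x 1, β.repr x 2, ?_⟩
  conv_rhs => rw [← β.sum_repr x]
  simp [β, Fin.sum_univ_three, add_assoc]

theorem Matrix.mulVec_eq_or_eq_neg_of_commute {X Y : Matrix n n K} {v : n → K}
    (hXY : X * Y = Y * X) (hline : ∀ x, X *ᵥ x = x → ∃ t : K, t • v = x) (hv0 : v ≠ 0)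
    (hv : X *ᵥ v = v)
    (hsign : ∀ (μ : K) x, x ≠ 0 → Y *ᵥ x = μ • x → μ = 1 ∨ μ = -1) :
    Y *ᵥ v = v ∨ Y *ᵥ v = -v := by
  obtain ⟨t, ht⟩ := hline (Y *ᵥ v) (by rw [mulVec_mulVec, hXY, ← mulVec_mulVec, hv])
  rcases hsign t v hv0 ht.symm with rfl | rfl
  · exact .inl (by rw [← ht, one_smul])
  · exact .inr (by rw [← ht, neg_one_smul])

theorem Matrix.mulVec_eq_neg_of_commute {X Y : Matrix n n K} {v : n → K}
    (hXY : X * Y = Y * X) (hline : ∀ x, X *ᵥ x = x → ∃ t : K, t • v = x) (hv0 : v ≠ 0)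
    (hv : X *ᵥ v = v)
    (hsign : ∀ (μ : K) x, x ≠ 0 → Y *ᵥ x = μ • x → μ = 1 ∨ μ = -1)
    (hdisj : NoCommonFixedVector X Y) : Y *ᵥ v = -v :=
  (mulVec_eq_or_eq_neg_of_commute hXY hline hv0 hv hsign).resolve_left
    fun h ↦ hv0 (hdisj v hv h)

theorem Matrix.NoCommonFixedVector.eq_zero_of_mul_mulVec_eq_self [NeZero (2 : K)]
    {X Y : Matrix n n K} (hdisj : NoCommonFixedVector X Y) (hXY : X * Y = Y * X) {w : n → K}
    (hdec : ∀ x, ∃ (c : K) (p : n → K), X *ᵥ p = p ∧ c • w + p = x)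
    (hw : Y *ᵥ w = w) (hXw : X *ᵥ w = -w) {z : n → K} (hz : (X * Y) *ᵥ z = z) : z = 0 := by
  obtain ⟨c, p, hp, rfl⟩ := hdec z
  -- `z + X z = 2 p` is fixed by both `X` and `X * Y`, hence also by `Y`.
  have hsum : (c • w + p) + X *ᵥ (c • w + p) = (2 : K) • p := by
    rw [mulVec_add, mulVec_smul, hXw, hp]; module
  have hXXY : (X * Y) *ᵥ (X *ᵥ (c • w + p)) = X *ᵥ (c • w + p) := by
    rw [mulVec_mulVec, mul_assoc, ← hXY, ← mulVec_mulVec, hz]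
  have hXq : X *ᵥ ((2 : K) • p) = (2 : K) • p := by rw [mulVec_smul, hp]
  have hYq : Y *ᵥ ((2 : K) • p) = (2 : K) • p := by
    conv_lhs => rw [← hXq, mulVec_mulVec, ← hXY, ← hsum, mulVec_add, hz, hXXY]
    exact hsum
  have hp0 : p = 0 := (smul_eq_zero.1 (hdisj _ hXq hYq)).resolve_left two_ne_zero
  refine eq_zero_of_eq_neg (K := K) ?_
  conv_lhs => rw [← hz]
  rw [← mulVec_mulVec, hp0, add_zero, mulVec_smul, hw, mulVec_smul, hXw, smul_neg]

theorem Matrix.exists_smul_eq_of_mulVec_eq_self [NeZero (2 : K)] {X Y : Matrix (Fin 3) (Fin 3) K}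
    (hXY : X * Y = Y * X) (hdisj : NoCommonFixedVector X Y)
    (hsign : ∀ (μ : K) x, x ≠ 0 → X *ᵥ x = μ • x → μ = 1 ∨ μ = -1)
    (hY : ∃ w ≠ 0, Y *ᵥ w = w) (hXY1 : ∃ z ≠ 0, (X * Y) *ᵥ z = z)
    {v : Fin 3 → K} (hv0 : v ≠ 0) (hv : X *ᵥ v = v) (v' : Fin 3 → K)
    (hv' : X *ᵥ v' = v') :
    ∃ t : K, t • v = v' := by
  by_contra hdep
  have hind : LinearIndependent K ![v, v'] :=
    (LinearIndependent.pair_iff' hv0).2 (by simpa using hdep)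
  obtain ⟨w, hw0, hw⟩ := hY
  have hXp : ∀ s t : K, X *ᵥ (s • v + t • v') = s • v + t • v' := by
    simp [mulVec_add, mulVec_smul, hv, hv']
  have hwspan : w ∉ Submodule.span K {v, v'} := by
    rw [Submodule.mem_span_pair]
    rintro ⟨s, t, rfl⟩
    exact hw0 (hdisj _ (hXp s t) hw)
  have hdec : ∀ x, ∃ (c : K) (p : Fin 3 → K), X *ᵥ p = p ∧ c • w + p = x := fun x ↦ by
    obtain ⟨c, s, t, hx⟩ := exists_eq_smul_add_smul_add_smul hind hwspan x
    exact ⟨c, _, hXp s t, hx⟩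
  have hYline : ∀ y, Y *ᵥ y = y → ∃ c : K, c • w = y := by
    intro y hy
    obtain ⟨c, p, hp, rfl⟩ := hdec y
    rw [mulVec_add, mulVec_smul, hw, add_right_inj] at hy
    exact ⟨c, by rw [hdisj p hp hy, add_zero]⟩
  have hXw : X *ᵥ w = -w := mulVec_eq_neg_of_commute hXY.symm hYline hw0 hw hsign hdisj.symm
  obtain ⟨z, hz0, hz⟩ := hXY1
  exact hz0 (hdisj.eq_zero_of_mul_mulVec_eq_self hXY hdec hw hXw hz)

theorem Matrix.linearIndependent_of_mulVec_eq_sign [DecidableEq n] [NeZero (2 : K)]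
    {A B : Matrix n n K} {v w u : n → K} (hv0 : v ≠ 0) (hw0 : w ≠ 0) (hu0 : u ≠ 0)
    (hAv : A *ᵥ v = v) (hAw : A *ᵥ w = -w) (hAu : A *ᵥ u = -u)
    (hBv : B *ᵥ v = -v) (hBw : B *ᵥ w = w) (hBu : B *ᵥ u = -u) :
    LinearIndependent K ![v, w, u] := by
  -- `v`, `w`, `u` are eigenvectors of `A - B` for the distinct eigenvalues `2`, `-2`, `0`.
  have h2 : (2 : K) ≠ -2 := fun h ↦
    two_ne_zero (mul_self_eq_zero.1 (show (2 : K) * 2 = 0 by linear_combination h))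
  refine Module.End.eigenvectors_linearIndependent' (toLin' (A - B)) ![2, -2, 0] ?_ _ ?_
  · intro i j hij
    fin_cases i <;> fin_cases j <;> simp at hij ⊢ <;>
      first
      | exact h2 hij | exact h2 hij.symm | exact two_ne_zero hij | exact two_ne_zero hij.symm
  · intro i
    fin_cases i <;> refine ⟨Module.End.mem_eigenspace_iff.2 ?_, ?_⟩ <;>
      simp [hAv, hAw, hAu, hBv, hBw, hBu, hv0, hw0, hu0] <;> module

theorem Matrix.eq_smul_one_of_mulVec_basis [DecidableEq n] {ι : Type*} {X : Matrix n n K} {c : K}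
    (b : Module.Basis ι K (n → K)) (h : ∀ i, X *ᵥ b i = c • b i) : X = c • 1 :=
  toLin'.injective (b.ext fun i ↦ by simp [h])

end LinearAlgebra

structure Subgroup.IsFixingSignAbelian {n K : Type*} [Fintype n] [DecidableEq n] [Field K]
    (H : Subgroup (GL n K)) : Prop where
  comm : ∀ x ∈ H, ∀ y ∈ H, x * y = y * x
  exists_fixed : ∀ x ∈ H, ∃ v ≠ 0, (x : Matrix n n K) *ᵥ v = v
  eigenvalue_sign :
    ∀ x ∈ H, ∀ (μ : K) v, v ≠ 0 → (x : Matrix n n K) *ᵥ v = μ • v →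
      μ = 1 ∨ μ = -1

namespace Subgroup.IsFixingSignAbelian

variable {K : Type*} [Field K] {H : Subgroup (GL (Fin 3) K)}
  {x y : GL (Fin 3) K} {v : Fin 3 → K}

theorem val_mul_comm (hH : H.IsFixingSignAbelian) (hx : x ∈ H) (hy : y ∈ H) :
    (x : Matrix (Fin 3) (Fin 3) K) * y = y * x := by
  rw [← Units.val_mul, hH.comm x hx y hy, Units.val_mul]

theorem exists_smul_eq [NeZero (2 : K)] (hH : H.IsFixingSignAbelian) (hx : x ∈ H) (hy : y ∈ H)
    (hdisj : NoCommonFixedVector (x : Matrix (Fin 3) (Fin 3) K) y) (hv0 : v ≠ 0)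
    (hv : (x : Matrix (Fin 3) (Fin 3) K) *ᵥ v = v) (v' : Fin 3 → K)
    (hv' : (x : Matrix (Fin 3) (Fin 3) K) *ᵥ v' = v') : ∃ t : K, t • v = v' :=
  exists_smul_eq_of_mulVec_eq_self (hH.val_mul_comm hx hy) hdisj (hH.eigenvalue_sign x hx)
    (hH.exists_fixed y hy) (by simpa using hH.exists_fixed _ (mul_mem hx hy)) hv0 hv v' hv'

theorem mulVec_eq_or_eq_neg [NeZero (2 : K)] (hH : H.IsFixingSignAbelian) (hx : x ∈ H)
    (hy : y ∈ H) (hdisj : NoCommonFixedVector (x : Matrix (Fin 3) (Fin 3) K) y) (hv0 : v ≠ 0)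
    (hv : (x : Matrix (Fin 3) (Fin 3) K) *ᵥ v = v) {g : GL (Fin 3) K} (hg : g ∈ H) :
    (g : Matrix (Fin 3) (Fin 3) K) *ᵥ v = v ∨ (g : Matrix (Fin 3) (Fin 3) K) *ᵥ v = -v :=
  mulVec_eq_or_eq_neg_of_commute (hH.val_mul_comm hx hg) (hH.exists_smul_eq hx hy hdisj hv0 hv)
    hv0 hv (hH.eigenvalue_sign g hg)

theorem mulVec_eq_neg [NeZero (2 : K)] (hH : H.IsFixingSignAbelian) (hx : x ∈ H) (hy : y ∈ H)
    (hdisj : NoCommonFixedVector (x : Matrix (Fin 3) (Fin 3) K) y) (hv0 : v ≠ 0)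
    (hv : (x : Matrix (Fin 3) (Fin 3) K) *ᵥ v = v) : (y : Matrix (Fin 3) (Fin 3) K) *ᵥ v = -v :=
  (hH.mulVec_eq_or_eq_neg hx hy hdisj hv0 hv hy).resolve_left fun h ↦ hv0 (hdisj v hv h)

theorem eq_one_of_mulVec_eq_self [NeZero (2 : K)] (hH : H.IsFixingSignAbelian) (hx : x ∈ H)
    (hy : y ∈ H) (hdisj : NoCommonFixedVector (x : Matrix (Fin 3) (Fin 3) K) y)
    {g : GL (Fin 3) K} (hg : g ∈ H)
    {w u : Fin 3 → K} (hli : LinearIndependent K ![v, w, u])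
    (hxv : (x : Matrix (Fin 3) (Fin 3) K) *ᵥ v = -v)
    (hxw : (x : Matrix (Fin 3) (Fin 3) K) *ᵥ w = -w)
    (hxu : (x : Matrix (Fin 3) (Fin 3) K) *ᵥ u = u)
    (hgv : (g : Matrix (Fin 3) (Fin 3) K) *ᵥ v = v)
    (hgw : (g : Matrix (Fin 3) (Fin 3) K) *ᵥ w = w) :
    g = 1 := by
  let β := basisOfLinearIndependentOfCardEqFinrank hli (by simp)
  rcases hH.mulVec_eq_or_eq_neg hx hy hdisj (show u ≠ 0 from hli.ne_zero 2) hxu hg with hgu | hgu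
  · refine Units.ext ((eq_smul_one_of_mulVec_basis β fun i ↦ ?_).trans (one_smul K 1))
    fin_cases i <;> simp [β, hgv, hgw, hgu]
  · -- otherwise `g * x = -1` would fix no vector
    obtain ⟨z, hz0, hz⟩ := hH.exists_fixed _ (mul_mem hg hx)
    have hgx : ((g * x : GL (Fin 3) K) : Matrix (Fin 3) (Fin 3) K) = (-1 : K) • 1 := by
      refine eq_smul_one_of_mulVec_basis β fun i ↦ ?_
      fin_cases i <;> simp [β, ← mulVec_mulVec, mulVec_neg, hxv, hxw, hxu, hgv, hgw, hgu]
    rw [hgx, neg_one_smul, neg_mulVec, one_mulVec] at hz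
    exact (hz0 (eq_zero_of_eq_neg (K := K) hz.symm)).elim

theorem le_closure_pair [NeZero (2 : K)] (hH : H.IsFixingSignAbelian) {a b : GL (Fin 3) K}
    (ha : a ∈ H) (hb : b ∈ H) (hdisj : NoCommonFixedVector (a : Matrix (Fin 3) (Fin 3) K) b) :
    H ≤ Subgroup.closure {a, b} := by
  have hab : a * b ∈ H := mul_mem ha hb
  have hdisj_a : NoCommonFixedVector ((a * b : GL (Fin 3) K) : Matrix (Fin 3) (Fin 3) K) a := by
    simpa [hH.val_mul_comm ha hb] using hdisj.symm.mul_right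
  have hdisj_b : NoCommonFixedVector ((a * b : GL (Fin 3) K) : Matrix (Fin 3) (Fin 3) K) b := by
    simpa using hdisj.mul_right
  obtain ⟨v, hv0, hv⟩ := hH.exists_fixed a ha
  obtain ⟨w, hw0, hw⟩ := hH.exists_fixed b hb
  obtain ⟨u, hu0, hu⟩ := hH.exists_fixed _ hab
  have hbv := hH.mulVec_eq_neg ha hb hdisj hv0 hv
  have haw := hH.mulVec_eq_neg hb ha hdisj.symm hw0 hw
  have hau := hH.mulVec_eq_neg hab ha hdisj_a hu0 hu
  have hbu := hH.mulVec_eq_neg hab hb hdisj_b hu0 hu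
  have hli := linearIndependent_of_mulVec_eq_sign hv0 hw0 hu0 hv haw hau hbv hw hbu
  intro g hg
  suffices ∃ k ∈ Subgroup.closure {a, b}, k ∈ H ∧
      ((g * k : GL (Fin 3) K) : Matrix (Fin 3) (Fin 3) K) *ᵥ v = v ∧
      ((g * k : GL (Fin 3) K) : Matrix (Fin 3) (Fin 3) K) *ᵥ w = w by
    obtain ⟨k, hk, hkH, hgkv, hgkw⟩ := this
    have hgk := hH.eq_one_of_mulVec_eq_self hab ha hdisj_a (mul_mem hg hkH) hli
      (by simp [← mulVec_mulVec, mulVec_neg, hbv, hv]) (by simp [← mulVec_mulVec, hw, haw]) hu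
      hgkv hgkw
    rw [eq_inv_of_mul_eq_one_left hgk]
    exact inv_mem hk
  have ha' : a ∈ Subgroup.closure {a, b} := Subgroup.subset_closure (by simp)
  have hb' : b ∈ Subgroup.closure {a, b} := Subgroup.subset_closure (by simp)
  rcases hH.mulVec_eq_or_eq_neg ha hb hdisj hv0 hv hg with hgv | hgv <;>
  rcases hH.mulVec_eq_or_eq_neg hb ha hdisj.symm hw0 hw hg with hgw | hgw
  · exact ⟨1, one_mem _, one_mem _, by simp [hgv, hgw]⟩
  · exact ⟨a, ha', ha, by simp [← mulVec_mulVec, mulVec_neg, hv, hgv, haw, hgw]⟩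
  · exact ⟨b, hb', hb, by simp [← mulVec_mulVec, mulVec_neg, hbv, hgv, hw, hgw]⟩
  · exact ⟨a * b, mul_mem ha' hb', hab,
      by simp [← mulVec_mulVec, mulVec_neg, hbv, hv, hgv, hw, haw, hgw]⟩

end Subgroup.IsFixingSignAbelian

section IntegerMatrices

variable {n : Type*} [Fintype n]

theorem Matrix.NoCommonFixedVector.map_intCast {X Y : Matrix n n ℤ}
    (h : NoCommonFixedVector X Y) :
    NoCommonFixedVector (X.map (Int.castRingHom ℚ)) (Y.map (Int.castRingHom ℚ)) := by
  intro x hX hY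
  obtain ⟨d, hd⟩ := IsLocalization.exist_integer_multiples_of_finite (nonZeroDivisors ℤ) x
  choose k hk using hd
  have hkx : Int.castRingHom ℚ ∘ k = (d : ℤ) • x := funext fun i ↦ by simpa using hk i
  have hfix : ∀ Z : Matrix n n ℤ, Z.map (Int.castRingHom ℚ) *ᵥ x = x → Z *ᵥ k = k := by
    intro Z hZ
    funext i
    apply Int.cast_injective (α := ℚ)
    have := RingHom.map_mulVec (Int.castRingHom ℚ) Z k i
    rw [hkx, mulVec_smul, hZ, ← hkx] at this
    simpa using this
  have hk0 := h k (hfix X hX) (hfix Y hY)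
  funext i
  have := hk i
  rw [hk0] at this
  simpa [nonZeroDivisors.coe_ne_zero] using this.symm

variable [DecidableEq n]

theorem Matrix.exists_mulVec_eq_self_of_det_sub_one_eq_zero {A : Type*} [CommRing A] [IsDomain A]
    {X : Matrix n n A} (h : (X - 1).det = 0) : ∃ v ≠ 0, X *ᵥ v = v := by
  obtain ⟨v, hv, hker⟩ := exists_mulVec_eq_zero_iff.2 h
  exact ⟨v, hv, by rwa [sub_mulVec, one_mulVec, sub_eq_zero] at hker⟩

theorem Matrix.isIntegral_of_mulVec_map_eq_smul {R K : Type*} [CommRing R] [Field K]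
    [Algebra R K] (X : Matrix n n R) {μ : K} {v : n → K} (hv : v ≠ 0)
    (h : X.map (algebraMap R K) *ᵥ v = μ • v) : IsIntegral R μ := by
  have hdet : (scalar n μ - X.map (algebraMap R K)).det = 0 :=
    exists_mulVec_eq_zero_iff.1 ⟨v, hv, by simp [sub_mulVec, h]⟩
  refine ⟨X.charpoly, X.charpoly_monic, ?_⟩
  rw [← Polynomial.eval_map, ← charpoly_map, eval_charpoly, hdet]

theorem Matrix.GeneralLinearGroup.eq_one_or_neg_one_of_mulVec_eq_smul (g : GL n ℤ) {μ : ℚ}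
    {v : n → ℚ} (hv : v ≠ 0)
    (h : (map (Int.castRingHom ℚ) g : Matrix n n ℚ) *ᵥ v = μ • v) :
    μ = 1 ∨ μ = -1 := by
  have hback : μ • (map (Int.castRingHom ℚ) g⁻¹ : Matrix n n ℚ) *ᵥ v = v := by
    rw [← mulVec_smul, ← h, mulVec_mulVec, ← Units.val_mul, ← map_mul, inv_mul_cancel,
      map_one, Units.val_one, one_mulVec]
  have hμ : μ ≠ 0 := by
    rintro rfl
    exact hv (by simpa using hback.symm)
  have hinv : (map (Int.castRingHom ℚ) g⁻¹ : Matrix n n ℚ) *ᵥ v = μ⁻¹ • v := by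
    conv_rhs => rw [← hback, smul_smul, inv_mul_cancel₀ hμ, one_smul]
  obtain ⟨a, rfl⟩ := IsIntegrallyClosed.isIntegral_iff.1
    ((g : Matrix n n ℤ).isIntegral_of_mulVec_map_eq_smul hv h)
  obtain ⟨b, hb⟩ := IsIntegrallyClosed.isIntegral_iff.1
    (((g⁻¹ : GL n ℤ) : Matrix n n ℤ).isIntegral_of_mulVec_map_eq_smul hv hinv)
  have hab : a * b = 1 := by
    have : ((a * b : ℤ) : ℚ) = 1 := by
      simp only [algebraMap_int_eq, eq_intCast] at hb hμ
      push_cast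
      rw [hb, mul_inv_cancel₀ hμ]
    exact_mod_cast this
  rcases Int.eq_one_or_neg_one_of_mul_eq_one hab with rfl | rfl <;> simp

theorem Matrix.GeneralLinearGroup.mulVec_eq_self_of_mem_closure {R : Type*} [CommRing R]
    {S : Set (GL n R)} {k : n → R} (hS : ∀ g ∈ S, (g : Matrix n n R) *ᵥ k = k) {g : GL n R}
    (hg : g ∈ Subgroup.closure S) : (g : Matrix n n R) *ᵥ k = k := by
  induction hg using Subgroup.closure_induction with
  | mem g hg => exact hS g hg
  | one => exact one_mulVec k
  | mul g h _ _ hg hh => rw [Units.val_mul, ← mulVec_mulVec, hh, hg]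
  | inv g _ hg =>
    conv_lhs => rw [← hg, mulVec_mulVec, ← Units.val_mul, inv_mul_cancel, Units.val_one,
      one_mulVec]

theorem Subgroup.isFixingSignAbelian_map_intCast {G : Subgroup (GL n ℤ)}
    (hab : ∀ x ∈ G, ∀ y ∈ G, x * y = y * x)
    (hG : ∀ g ∈ G, ((g : Matrix n n ℤ) - 1).det = 0) :
    (G.map (GeneralLinearGroup.map (Int.castRingHom ℚ))).IsFixingSignAbelian where
  comm := by
    rintro _ ⟨x, hx, rfl⟩ _ ⟨y, hy, rfl⟩
    rw [← map_mul, hab x hx y hy, map_mul]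
  exists_fixed := by
    rintro _ ⟨g, hg, rfl⟩
    apply exists_mulVec_eq_self_of_det_sub_one_eq_zero
    have := congrArg (Int.castRingHom ℚ) (hG g hg)
    rwa [RingHom.map_det, map_sub, map_one, map_zero] at this
  eigenvalue_sign := by
    rintro _ ⟨g, -, rfl⟩ μ v hv h
    exact g.eq_one_or_neg_one_of_mulVec_eq_smul hv h

end IntegerMatrices

theorem maximal_abelian_klein_group_general
    (N M : GL (Fin 3) ℤ)
    (hfix : ∀ k : Fin 3 → ℤ,
      (∀ n m : ℤ, ((N ^ n * M ^ m : GL (Fin 3) ℤ) :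
        Matrix (Fin 3) (Fin 3) ℤ).mulVec k = k) → k = 0)
    (G : Subgroup (GL (Fin 3) ℤ))
    (hab : ∀ x ∈ G, ∀ y ∈ G, x * y = y * x)
    (hNG : N ∈ G) (hMG : M ∈ G)
    (hGspec : ∀ g ∈ G, ((g : Matrix (Fin 3) (Fin 3) ℤ) - 1).det = 0) :
    G = Subgroup.closure ({N, M} : Set (GL (Fin 3) ℤ)) := by
  set ι := GeneralLinearGroup.map (n := Fin 3) (Int.castRingHom ℚ)
  have hι : Function.Injective ι := fun g h hgh ↦
    Units.ext (map_injective Int.cast_injective (congrArg Units.val hgh))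
  have hdisj : NoCommonFixedVector (N : Matrix (Fin 3) (Fin 3) ℤ) M := fun k hN hM ↦
    hfix k fun n m ↦ GeneralLinearGroup.mulVec_eq_self_of_mem_closure (S := {N, M})
      (by rintro g (rfl | rfl) <;> assumption)
      (mul_mem (zpow_mem (Subgroup.subset_closure (by simp)) n)
        (zpow_mem (Subgroup.subset_closure (by simp)) m))
  refine le_antisymm ?_ ((Subgroup.closure_le G).2 (Set.insert_subset hNG (by simpa using hMG)))
  rw [← Subgroup.map_le_map_iff_of_injective hι, MonoidHom.map_closure, Set.image_pair]
  exact (Subgroup.isFixingSignAbelian_map_intCast hab hGspec).le_closure_pair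
    (Subgroup.mem_map_of_mem ι hNG) (Subgroup.mem_map_of_mem ι hMG) hdisj.map_intCast

theorem maximal_abelian_klein_group
    (N M : GL (Fin 3) ℤ)
    (hcomm : N * M = M * N)
    (hspec : ∀ n m : ℤ, (((N ^ n * M ^ m : GL (Fin 3) ℤ) :
      Matrix (Fin 3) (Fin 3) ℤ) - 1).det = 0)
    (hfix : ∀ k : Fin 3 → ℤ,
      (∀ n m : ℤ, ((N ^ n * M ^ m : GL (Fin 3) ℤ) :
        Matrix (Fin 3) (Fin 3) ℤ).mulVec k = k) → k = 0)
    (G : Subgroup (GL (Fin 3) ℤ))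
    (hab : ∀ x ∈ G, ∀ y ∈ G, x * y = y * x)
    (hNG : N ∈ G) (hMG : M ∈ G)
    (hGspec : ∀ g ∈ G, ((g : Matrix (Fin 3) (Fin 3) ℤ) - 1).det = 0) :
    G = Subgroup.closure ({N, M} : Set (GL (Fin 3) ℤ)) :=
  maximal_abelian_klein_group_general N M hfix G hab hNG hMG hGspec
end

section
/- Let p ≥ 3 and let A : ℤ^p → GL(3,ℤ) be a spectrally unitary ℤ^p-action on ℤ^3 with Fix(A) = {0}. Then there exists an index i with 1 ≤ i ≤ p such that the only k ∈ ℤ³ satisfying A(e_j)·k = k for every j ≠ i is k = 0, where e_1, …, e_p is the standard basis of ℤ^p. -/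
/-!
Suppose every restricted action fixes some `K i ≠ 0`. As `Fix(A) = 0`, the generator `A(e_i)` moves
`K i` while all other generators fix it; applying `A(e_j) - 1` to a linear relation shows such
vectors are linearly independent, so `p = 3` and over `ℚ` they form a basis. By commutativity
`A(e_i) K i` is again fixed by the other generators, hence equals `c i • K i` with `c i ≠ 1`. So
`A(1, …, 1)` is diagonal in this basis without eigenvalue `1`, contradicting spectral unitarity.
-/

open Matrix

section FixedOffDiagonal

variable {R V ι : Type*} [CommRing R] [AddCommGroup V] [Module R V] [Fintype ι]
  {f : ι → Module.End R V}

lemma apply_sum_smul_sub_sum {k : ι → V} (hfix : ∀ i j, j ≠ i → f j (k i) = k i)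
    (c : ι → R) (j : ι) :
    f j (∑ i, c i • k i) - ∑ i, c i • k i = c j • (f j (k j) - k j) := by
  rw [map_sum, ← Finset.sum_sub_distrib]
  refine (Finset.sum_eq_single j (fun i _ hij => ?_) (by simp)).trans ?_
  · rw [map_smul, hfix i j hij.symm, sub_self]
  · rw [map_smul, smul_sub]

lemma coeff_eq_zero_of_apply_sum_smul_eq [IsDomain R] [Module.IsTorsionFree R V] {k : ι → V}
    (hfix : ∀ i j, j ≠ i → f j (k i) = k i) {j : ι} (hmove : f j (k j) ≠ k j) {c : ι → R}
    (h : f j (∑ i, c i • k i) = ∑ i, c i • k i) : c j = 0 := by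
  have := apply_sum_smul_sub_sum hfix c j
  rwa [h, sub_self, eq_comm, smul_eq_zero_iff_left (sub_ne_zero.mpr hmove)] at this

theorem linearIndependent_of_apply_eq_self_of_ne [IsDomain R] [Module.IsTorsionFree R V]
    {k : ι → V} (hfix : ∀ i j, j ≠ i → f j (k i) = k i) (hmove : ∀ i, f i (k i) ≠ k i) :
    LinearIndependent R k :=
  Fintype.linearIndependent_iff.mpr fun _ hc j =>
    coeff_eq_zero_of_apply_sum_smul_eq hfix (hmove j) (by rw [hc, map_zero])

variable [IsDomain R] (b : Module.Basis ι R V)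
  (hfix : ∀ i j, j ≠ i → f j (b i) = b i) (hmove : ∀ i, f i (b i) ≠ b i)
include hfix hmove

theorem exists_eq_smul_of_apply_eq_self_of_ne {i : ι} {w : V} (hw : ∀ j, j ≠ i → f j w = w) :
    ∃ c : R, w = c • b i := by
  have := b.isTorsionFree
  refine ⟨b.repr w i, ?_⟩
  conv_lhs => rw [← b.sum_repr w]
  refine Finset.sum_eq_single i (fun j _ hji => ?_) (by simp)
  rw [coeff_eq_zero_of_apply_sum_smul_eq (c := b.repr w) hfix (hmove j)
    (by rw [b.sum_repr]; exact hw j hji), zero_smul]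

theorem exists_apply_eq_smul_of_commute (hcomm : ∀ i j, Commute (f i) (f j)) (i : ι) :
    ∃ c : R, f i (b i) = c • b i :=
  exists_eq_smul_of_apply_eq_self_of_ne b hfix hmove fun j hji => by
    rw [← Module.End.mul_apply, (hcomm j i).eq, Module.End.mul_apply, hfix i j hji]

theorem eq_zero_of_apply_eq_self (hcomm : ∀ i j, Commute (f i) (f j)) {g : Module.End R V}
    (hg : ∀ i, g (b i) = f i (b i)) {w : V} (hw : g w = w) : w = 0 := by
  choose c hc using exists_apply_eq_smul_of_commute b hfix hmove hcomm
  have hgw : g w = ∑ i, (b.repr w i * c i) • b i := by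
    conv_lhs => rw [← b.sum_repr w]
    simp only [map_sum, map_smul, hg, hc, smul_smul]
  refine b.ext_elem fun i => ?_
  have hi : b.repr w i * c i = b.repr w i := by
    conv_rhs => rw [← hw, hgw, b.repr_sum_self]
  have hc1 : c i - 1 ≠ 0 := sub_ne_zero.mpr fun h => hmove i (by rw [hc, h, one_smul])
  simpa [hc1] using (show b.repr w i * (c i - 1) = 0 by rw [mul_sub, hi, mul_one, sub_self])

end FixedOffDiagonal

section IntegerMatrices

variable {n : Type*} [Fintype n] [DecidableEq n]

def mulVecStabilizer {G R : Type*} [AddGroup G] [CommRing R] (A : G → GL n R)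
    (hA : ∀ ℓ ℓ', A (ℓ + ℓ') = A ℓ * A ℓ') (k : n → R) : AddSubgroup G where
  carrier := {ℓ | (A ℓ : Matrix n n R) *ᵥ k = k}
  add_mem' {x y} hx hy := by
    simp only [Set.mem_ofPred_eq, hA, Units.val_mul, ← mulVec_mulVec] at hx hy ⊢
    rw [hy, hx]
  zero_mem' := by
    simp [mul_eq_left.mp (show A 0 * A 0 = A 0 by rw [← hA, add_zero])]
  neg_mem' {x} hx := by
    have h := congrArg ((A (-x) : Matrix n n R) *ᵥ ·) hx
    simp only [mulVec_mulVec, ← Units.val_mul, ← hA, neg_add_cancel,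
      mul_eq_left.mp (show A 0 * A 0 = A 0 by rw [← hA, add_zero]), Units.val_one,
      one_mulVec] at h
    exact h.symm

lemma commute_val_of_map_add {G R : Type*} [AddCommGroup G] [CommRing R] {A : G → GL n R}
    (hA : ∀ ℓ ℓ', A (ℓ + ℓ') = A ℓ * A ℓ') (x y : G) :
    Commute (A x : Matrix n n R) (A y) := by
  simp only [Commute, SemiconjBy, ← Units.val_mul, ← hA, add_comm]

variable {ι R : Type*} [Fintype ι] [DecidableEq ι] [CommRing R] {A : (ι → ℤ) → GL n R}
  (hA : ∀ ℓ ℓ', A (ℓ + ℓ') = A ℓ * A ℓ') {k : n → R}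
include hA

lemma mulVec_eq_self_of_forall_single {ℓ : ι → ℤ}
    (hk : ∀ j, ℓ j ≠ 0 → (A (Pi.single j 1) : Matrix n n R) *ᵥ k = k) :
    (A ℓ : Matrix n n R) *ᵥ k = k := by
  change ℓ ∈ mulVecStabilizer A hA k
  rw [← Finset.univ_sum_single ℓ]
  refine AddSubgroup.sum_mem _ fun j _ => ?_
  by_cases hj : ℓ j = 0
  · rw [hj, Pi.single_zero]
    exact AddSubgroup.zero_mem _
  · rw [← mul_one (ℓ j), ← smul_eq_mul, Pi.single_smul]
    exact AddSubgroup.zsmul_mem _ (hk j hj) _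

lemma mulVec_eq_mulVec_single_of_apply_eq_one {i : ι} {ℓ : ι → ℤ} (hℓ : ℓ i = 1)
    (hk : ∀ j, j ≠ i → (A (Pi.single j 1) : Matrix n n R) *ᵥ k = k) :
    (A ℓ : Matrix n n R) *ᵥ k = (A (Pi.single i 1) : Matrix n n R) *ᵥ k := by
  have hrest : (A (ℓ - Pi.single i 1) : Matrix n n R) *ᵥ k = k :=
    mulVec_eq_self_of_forall_single hA fun j hj =>
      hk j (by rintro rfl; simp [hℓ] at hj)
  rw [← add_sub_cancel (Pi.single i 1) ℓ, hA, Units.val_mul, ← mulVec_mulVec, hrest]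

end IntegerMatrices

section IntCast

variable {n : Type*} [Fintype n] [DecidableEq n] (S : Type*) [CommRing S]

noncomputable def intMatrixToLin : Matrix n n ℤ →+* Module.End S (n → S) :=
  (toLinAlgEquiv' : Matrix n n S ≃ₐ[S] Module.End S (n → S)).toRingHom.comp
    (Int.castRingHom S).mapMatrix

lemma intMatrixToLin_apply_intCast (M : Matrix n n ℤ) (v : n → ℤ) :
    intMatrixToLin S M (Int.cast ∘ v) = Int.cast ∘ (M *ᵥ v) :=
  funext fun i => (RingHom.map_mulVec (Int.castRingHom S) M v i).symm

lemma intMatrixToLin_apply_intCast_eq_iff [CharZero S] (M : Matrix n n ℤ) (v : n → ℤ) :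
    intMatrixToLin S M (Int.cast ∘ v) = Int.cast ∘ v ↔ M *ᵥ v = v := by
  rw [intMatrixToLin_apply_intCast, (Int.cast_injective (α := S)).comp_left.eq_iff]

end IntCast

theorem exists_index_with_trivial_restricted_fix
    (p : ℕ) (hp : 3 ≤ p)
    (A : (Fin p → ℤ) → GL (Fin 3) ℤ)
    (hA : ∀ ℓ ℓ' : Fin p → ℤ, A (ℓ + ℓ') = A ℓ * A ℓ')
    (hspec : ∀ ℓ : Fin p → ℤ, ((A ℓ : Matrix (Fin 3) (Fin 3) ℤ) - 1).det = 0)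
    (hfix : ∀ k : Fin 3 → ℤ,
      (∀ ℓ : Fin p → ℤ, (A ℓ : Matrix (Fin 3) (Fin 3) ℤ).mulVec k = k) → k = 0) :
    ∃ i : Fin p, ∀ k : Fin 3 → ℤ,
      (∀ j : Fin p, j ≠ i →
        (A (Pi.single j 1) : Matrix (Fin 3) (Fin 3) ℤ).mulVec k = k) → k = 0 := by
  by_contra! hK
  choose K hKfix hK0 using hK
  have hmove : ∀ i, (A (Pi.single i 1) : Matrix (Fin 3) (Fin 3) ℤ) *ᵥ K i ≠ K i :=
    fun i hi => hK0 i <| hfix _ fun ℓ => mulVec_eq_self_of_forall_single hA fun j _ =>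
      if hji : j = i then hji ▸ hi else hKfix i j hji
  let f i := intMatrixToLin ℚ (A (Pi.single i 1) : Matrix (Fin 3) (Fin 3) ℤ)
  let k i : Fin 3 → ℚ := Int.cast ∘ K i
  have hfixq : ∀ i j, j ≠ i → f j (k i) = k i := fun i j hji =>
    (intMatrixToLin_apply_intCast_eq_iff ℚ _ _).mpr (hKfix i j hji)
  have hmoveq : ∀ i, f i (k i) ≠ k i := fun i =>
    (intMatrixToLin_apply_intCast_eq_iff ℚ _ _).not.mpr (hmove i)
  have hcomm : ∀ i j, Commute (f i) (f j) := fun i j => (commute_val_of_map_add hA _ _).map _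
  have hli := linearIndependent_of_apply_eq_self_of_ne hfixq hmoveq
  have hp3 : p = 3 := le_antisymm (by simpa using hli.fintype_card_le_finrank) hp
  let b := basisOfLinearIndependentOfCardEqFinrank' k hli (by simp [hp3])
  have hb : ⇑b = k := coe_basisOfLinearIndependentOfCardEqFinrank' k hli _
  obtain ⟨w, hw0, hw⟩ := exists_mulVec_eq_zero_iff.mpr (hspec 1)
  rw [sub_mulVec, one_mulVec, sub_eq_zero] at hw
  have hwq : (Int.cast ∘ w : Fin 3 → ℚ) = 0 := by
    refine eq_zero_of_apply_eq_self b (hb ▸ hfixq) (hb ▸ hmoveq) hcomm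
      (g := intMatrixToLin ℚ (A 1 : Matrix (Fin 3) (Fin 3) ℤ)) (fun i => ?_)
      ((intMatrixToLin_apply_intCast_eq_iff ℚ _ _).mpr hw)
    rw [hb, intMatrixToLin_apply_intCast, intMatrixToLin_apply_intCast,
      mulVec_eq_mulVec_single_of_apply_eq_one hA rfl (hKfix i)]
  exact hw0 (funext fun m => by simpa using congrFun hwq m)
end

section
/- Let a, b, c, d be integers with a·d + 2(b + c) = 0, and let N = N(a,b) and M = M(c,d). Then N and M commute, N² = I, M² = I, 1 is an eigenvalue of N^n·M^m for every (n,m) ∈ ℤ², and the only k ∈ ℤ³ with N·k = k and M·k = k is k = 0. -/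
open Matrix

/-! Since `N` and `M` are commuting involutions, `N ^ n * M ^ m` is one of `1`, `N`, `M`, `N * M`.
Each of these is upper triangular with a diagonal entry `1`, so `X - 1` is singular. A common
fixed vector `k` has `k₁ = -k₁`, `k₂ = -k₂` (from `N`) and then `k₀ = -k₀` (from `M`), hence
vanishes since `ℤ` has no `2`-torsion. -/

lemma zpow_eq_one_or_self_of_sq_eq_one {G : Type*} [Group G] {g : G} (hg : g ^ 2 = 1) (n : ℤ) :
    g ^ n = 1 ∨ g ^ n = g := by
  rw [zpow_eq_zpow_emod' n hg]
  rcases Int.emod_two_eq n with h | h <;> simp [h]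

section

variable (a b c d : ℤ)

lemma Nmat_sq : Nmat a b ^ 2 = 1 := by
  rw [sq, Nmat, mul_fin_three, one_fin_three]; norm_num

lemma Mmat_sq : Mmat c d ^ 2 = 1 := by
  rw [sq, Mmat, mul_fin_three, one_fin_three]; norm_num

lemma Nmat_mul_Mmat : Nmat a b * Mmat c d = !![-1, -a, b + c + a * d; 0, 1, -d; 0, 0, -1] := by
  rw [Nmat, Mmat, mul_fin_three]; congr 1; simp; ring

lemma Mmat_mul_Nmat : Mmat c d * Nmat a b = !![-1, -a, -b - c; 0, 1, -d; 0, 0, -1] := by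
  rw [Nmat, Mmat, mul_fin_three]; congr 1; simp; ring

lemma commute_Nmat_Mmat_iff : Commute (Nmat a b) (Mmat c d) ↔ a * d + 2 * (b + c) = 0 := by
  rw [Commute, SemiconjBy, Nmat_mul_Mmat, Mmat_mul_Nmat]
  simp only [EmbeddingLike.apply_eq_iff_eq, vecCons_inj, and_true, true_and]
  constructor <;> intro h <;> linarith

lemma det_Nmat_sub_one : (Nmat a b - 1).det = 0 := by
  simp [Nmat, det_fin_three]

lemma det_Mmat_sub_one : (Mmat c d - 1).det = 0 := by
  simp [Mmat, det_fin_three]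

lemma det_Nmat_mul_Mmat_sub_one : (Nmat a b * Mmat c d - 1).det = 0 := by
  simp [Nmat_mul_Mmat, det_fin_three]

lemma eq_zero_of_Nmat_mulVec_eq_self_of_Mmat_mulVec_eq_self {k : Fin 3 → ℤ}
    (hN : Nmat a b *ᵥ k = k) (hM : Mmat c d *ᵥ k = k) : k = 0 := by
  have h1 := congrFun hN 1
  have h2 := congrFun hN 2
  have h0 := congrFun hM 0
  simp only [Nmat, Mmat, mulVec, dotProduct, Fin.sum_univ_three, of_apply, cons_val', cons_val,
    cons_val_zero, cons_val_one, cons_val_fin_one, neg_mul, one_mul, zero_mul, add_zero,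
    zero_add] at h0 h1 h2
  have hk1 : k 1 = 0 := by omega
  have hk2 : k 2 = 0 := by omega
  have hk0 : k 0 = 0 := by rw [hk2, mul_zero] at h0; omega
  ext i; fin_cases i <;> assumption

end

theorem fundamental_example_properties
    (a b c d : ℤ) (h : a * d + 2 * (b + c) = 0) :
    ∃ N M : GL (Fin 3) ℤ,
      (N : Matrix (Fin 3) (Fin 3) ℤ) = Nmat a b ∧
      (M : Matrix (Fin 3) (Fin 3) ℤ) = Mmat c d ∧
      N * M = M * N ∧ N ^ 2 = 1 ∧ M ^ 2 = 1 ∧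
      (∀ n m : ℤ, (((N ^ n * M ^ m : GL (Fin 3) ℤ) :
        Matrix (Fin 3) (Fin 3) ℤ) - 1).det = 0) ∧
      (∀ k : Fin 3 → ℤ,
        (N : Matrix (Fin 3) (Fin 3) ℤ).mulVec k = k →
        (M : Matrix (Fin 3) (Fin 3) ℤ).mulVec k = k → k = 0) := by
  set N : GL (Fin 3) ℤ := Units.ofPowEqOne _ 2 (Nmat_sq a b) two_ne_zero
  set M : GL (Fin 3) ℤ := Units.ofPowEqOne _ 2 (Mmat_sq c d) two_ne_zero
  have hN : N ^ 2 = 1 := Units.pow_ofPowEqOne _ _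
  have hM : M ^ 2 = 1 := Units.pow_ofPowEqOne _ _
  refine ⟨N, M, rfl, rfl, Units.ext ((commute_Nmat_Mmat_iff a b c d).2 h), hN, hM,
    fun n m => ?_, fun k => eq_zero_of_Nmat_mulVec_eq_self_of_Mmat_mulVec_eq_self a b c d⟩
  rcases zpow_eq_one_or_self_of_sq_eq_one hN n with hn | hn <;>
    rcases zpow_eq_one_or_self_of_sq_eq_one hM m with hm | hm <;>
    simp [hn, hm, N, M, det_Nmat_sub_one, det_Mmat_sub_one, det_Nmat_mul_Mmat_sub_one]
end

section
/- Fix an integer a and let A₁ = [[1,a,0,0],[0,−1,0,0],[0,0,0,−1],[0,0,1,−2]] and A₂ = [[−1,0,0,0],[0,−1,0,0],[0,0,1,0],[0,0,0,1]], both elements of GL(4,ℤ). Then: (i) A₁·A₂ = A₂·A₁; (ii) 1 is an eigenvalue of A₁^n·A₂^m for every (n,m) ∈ ℤ²; (iii) the only k ∈ ℤ⁴ with A₁·k = k and A₂·k = k is k = 0; and (iv) A₁ has infinite order in GL(4,ℤ), so the subgroup generated by A₁ and A₂ is not isomorphic to the Klein four-group. -/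
/-!
The matrices are block diagonal: on `span(e₁, e₂)` both act by commuting involutions, on
`span(e₃, e₄)` `A₂` is the identity and `A₁` is `-1` times a unipotent Jordan block. Each of the
three nontrivial sign characters of `ℤ²/2ℤ²` is realised by a common eigenvector, and every
`(n, m)` lies in the kernel of one of them, so `A₁ⁿ A₂ᵐ` fixes a nonzero vector. The Jordan block
gives `A₁` infinite order, so the generated group is infinite and cannot be the Klein four-group.
-/
open Matrix

section Eigenvectors

variable {ι R : Type*} [Fintype ι] [DecidableEq ι] [CommRing R]

theorem Matrix.GeneralLinearGroup.mulVec_zpow_of_mulVec_eq_smul {u : GL ι R} {v : ι → R}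
    {ε : Rˣ} (h : (u : Matrix ι ι R) *ᵥ v = (ε : R) • v) (k : ℤ) :
    ((u ^ k : GL ι R) : Matrix ι ι R) *ᵥ v = ((ε ^ k : Rˣ) : R) • v := by
  have hinv : ((u⁻¹ : GL ι R) : Matrix ι ι R) *ᵥ v = ((ε⁻¹ : Rˣ) : R) • v :=
    calc ((u⁻¹ : GL ι R) : Matrix ι ι R) *ᵥ v
        = ((u⁻¹ : GL ι R) : Matrix ι ι R) *ᵥ (((ε⁻¹ : Rˣ) : R) • (ε : R) • v) := by
          rw [smul_smul, ← Units.val_mul, inv_mul_cancel, Units.val_one, one_smul]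
      _ = ((ε⁻¹ : Rˣ) : R) • v := by
          rw [← h, mulVec_smul, mulVec_mulVec, ← Units.val_mul, inv_mul_cancel, Units.val_one,
            one_mulVec]
  induction k using Int.induction_on with
  | zero => simp
  | succ k ih =>
    rw [_root_.zpow_add_one, _root_.zpow_add_one, Units.val_mul, ← mulVec_mulVec, h,
      mulVec_smul, ih, smul_smul, Units.val_mul, mul_comm]
  | pred k ih =>
    rw [_root_.zpow_sub_one, _root_.zpow_sub_one, Units.val_mul, ← mulVec_mulVec, hinv,
      mulVec_smul, ih, smul_smul, Units.val_mul, mul_comm]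

theorem Matrix.det_sub_one_eq_zero_of_mulVec_eq_self [IsDomain R] {X : Matrix ι ι R} {v : ι → R}
    (hv : v ≠ 0) (h : X *ᵥ v = v) : (X - 1).det = 0 :=
  exists_mulVec_eq_zero_iff.mp ⟨v, hv, by rw [sub_mulVec, one_mulVec, h, sub_self]⟩

theorem Matrix.GeneralLinearGroup.det_zpow_mul_zpow_sub_one_eq_zero [IsDomain R]
    {u w : GL ι R} {v : ι → R} (hv : v ≠ 0) {ε δ : Rˣ} (hu : (u : Matrix ι ι R) *ᵥ v = (ε : R) • v)
    (hw : (w : Matrix ι ι R) *ᵥ v = (δ : R) • v) {k l : ℤ} (h : ε ^ k * δ ^ l = 1) :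
    (((u ^ k * w ^ l : GL ι R) : Matrix ι ι R) - 1).det = 0 := by
  refine det_sub_one_eq_zero_of_mulVec_eq_self hv ?_
  rw [Units.val_mul, ← mulVec_mulVec, GeneralLinearGroup.mulVec_zpow_of_mulVec_eq_smul hw,
    mulVec_smul, GeneralLinearGroup.mulVec_zpow_of_mulVec_eq_smul hu, smul_smul, ← Units.val_mul,
    mul_comm, h, Units.val_one, one_smul]

theorem pow_succ_mulVec_of_mulVec_eq_smul_add {X : Matrix ι ι R} {v w : ι → R} {μ : R}
    (hw : X *ᵥ w = μ • w) (hv : X *ᵥ v = μ • v + w) (k : ℕ) :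
    X ^ (k + 1) *ᵥ v = μ ^ (k + 1) • v + ((k + 1) * μ ^ k) • w := by
  induction k with
  | zero => simpa using hv
  | succ k ih =>
    rw [pow_succ', ← mulVec_mulVec, ih, mulVec_add, mulVec_smul, mulVec_smul, hv, hw]
    push_cast
    module

end Eigenvectors

theorem Subgroup.isEmpty_mulEquiv_of_not_isOfFinOrder {G H : Type*} [Group G] [Group H]
    [Finite H] {S : Subgroup G} {g : G} (hg : g ∈ S) (h : ¬ IsOfFinOrder g) :
    IsEmpty (S ≃* H) :=
  ⟨fun e => by
    have : Finite S := Finite.of_equiv H e.symm.toEquiv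
    exact h (S.subtype.isOfFinOrder (isOfFinOrder_of_finite (⟨g, hg⟩ : S)))⟩

namespace FourDimCounterexample

def A₁ (a : ℤ) : GL (Fin 4) ℤ :=
  ⟨!![1, a, 0, 0; 0, -1, 0, 0; 0, 0, 0, -1; 0, 0, 1, -2],
   !![1, a, 0, 0; 0, -1, 0, 0; 0, 0, -2, 1; 0, 0, -1, 0],
   by ext i j; fin_cases i <;> fin_cases j <;> simp [mul_apply, Fin.sum_univ_four],
   by ext i j; fin_cases i <;> fin_cases j <;> simp [mul_apply, Fin.sum_univ_four]⟩

def A₂ : GL (Fin 4) ℤ :=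
  ⟨!![-1, 0, 0, 0; 0, -1, 0, 0; 0, 0, 1, 0; 0, 0, 0, 1],
   !![-1, 0, 0, 0; 0, -1, 0, 0; 0, 0, 1, 0; 0, 0, 0, 1],
   by ext i j; fin_cases i <;> fin_cases j <;> simp [mul_apply, Fin.sum_univ_four],
   by ext i j; fin_cases i <;> fin_cases j <;> simp [mul_apply, Fin.sum_univ_four]⟩

theorem A₁_mulVec (a x₀ x₁ x₂ x₃ : ℤ) :
    (A₁ a : Matrix (Fin 4) (Fin 4) ℤ) *ᵥ ![x₀, x₁, x₂, x₃] =
      ![x₀ + a * x₁, -x₁, -x₃, x₂ - 2 * x₃] := by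
  ext i; fin_cases i <;> simp [A₁, mulVec, dotProduct, Fin.sum_univ_four]
  ring

theorem A₂_mulVec (x₀ x₁ x₂ x₃ : ℤ) :
    (A₂ : Matrix (Fin 4) (Fin 4) ℤ) *ᵥ ![x₀, x₁, x₂, x₃] = ![-x₀, -x₁, x₂, x₃] := by
  ext i; fin_cases i <;> simp [A₂, mulVec, dotProduct, Fin.sum_univ_four]

theorem A₁_mul_A₂ (a : ℤ) : A₁ a * A₂ = A₂ * A₁ a := by
  ext i j; fin_cases i <;> fin_cases j <;> simp [A₁, A₂, mul_apply, Fin.sum_univ_four]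

theorem eq_zero_of_A₁_mulVec_eq_self_of_A₂_mulVec_eq_self {a : ℤ} {k : Fin 4 → ℤ}
    (h₁ : (A₁ a : Matrix (Fin 4) (Fin 4) ℤ) *ᵥ k = k)
    (h₂ : (A₂ : Matrix (Fin 4) (Fin 4) ℤ) *ᵥ k = k) : k = 0 := by
  obtain ⟨x₀, x₁, x₂, x₃, rfl⟩ : ∃ x₀ x₁ x₂ x₃, k = ![x₀, x₁, x₂, x₃] :=
    ⟨k 0, k 1, k 2, k 3, by ext i; fin_cases i <;> rfl⟩
  rw [A₁_mulVec] at h₁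
  rw [A₂_mulVec] at h₂
  simp only [vecCons_inj] at h₁ h₂
  ext i; fin_cases i <;> simp <;> omega

theorem det_A₁_zpow_mul_A₂_zpow_sub_one (a n m : ℤ) :
    (((A₁ a ^ n * A₂ ^ m : GL (Fin 4) ℤ) : Matrix (Fin 4) (Fin 4) ℤ) - 1).det = 0 := by
  rcases Int.even_or_odd n with hn | hn
  · refine GeneralLinearGroup.det_zpow_mul_zpow_sub_one_eq_zero (v := ![0, 0, 1, 1])
      (ε := -1) (δ := 1) (fun h => by simpa using congrFun h 2) ?_ ?_
      (by simp [hn.neg_one_zpow])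
    · rw [A₁_mulVec]; simp
    · rw [A₂_mulVec]; simp
  rcases Int.even_or_odd m with hm | hm
  · refine GeneralLinearGroup.det_zpow_mul_zpow_sub_one_eq_zero (v := ![1, 0, 0, 0])
      (ε := 1) (δ := -1) (fun h => by simpa using congrFun h 0) ?_ ?_
      (by simp [hm.neg_one_zpow])
    · rw [A₁_mulVec]; simp
    · rw [A₂_mulVec]; simp
  · refine GeneralLinearGroup.det_zpow_mul_zpow_sub_one_eq_zero (v := ![a, -2, 0, 0])
      (ε := -1) (δ := -1) (fun h => by simpa using congrFun h 1) ?_ ?_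
      (by simp [hn.neg_one_zpow, hm.neg_one_zpow])
    · rw [A₁_mulVec]; simp [mul_two]
    · rw [A₂_mulVec]; simp

theorem not_isOfFinOrder_A₁ (a : ℤ) : ¬ IsOfFinOrder (A₁ a) := by
  rw [isOfFinOrder_iff_pow_eq_one]
  rintro ⟨_, hn, hpow⟩
  obtain ⟨k, rfl⟩ := Nat.exists_eq_add_one_of_ne_zero hn.ne'
  have hjordan := pow_succ_mulVec_of_mulVec_eq_smul_add (X := A₁ a) (v := ![0, 0, 1, 0])
    (w := ![0, 0, 1, 1]) (μ := -1) (by rw [A₁_mulVec]; simp) (by rw [A₁_mulVec]; simp) k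
  rw [← Units.val_pow_eq_pow_val, hpow, Units.val_one, one_mulVec] at hjordan
  have : (k : ℤ) + 1 = 0 := by simpa using congrFun hjordan 3
  omega

end FourDimCounterexample

theorem four_dim_counterexample (a : ℤ) :
    ∃ A₁ A₂ : GL (Fin 4) ℤ,
      (A₁ : Matrix (Fin 4) (Fin 4) ℤ) =
        !![1, a, 0, 0; 0, -1, 0, 0; 0, 0, 0, -1; 0, 0, 1, -2] ∧
      (A₂ : Matrix (Fin 4) (Fin 4) ℤ) =
        !![-1, 0, 0, 0; 0, -1, 0, 0; 0, 0, 1, 0; 0, 0, 0, 1] ∧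
      A₁ * A₂ = A₂ * A₁ ∧
      (∀ n m : ℤ, (((A₁ ^ n * A₂ ^ m : GL (Fin 4) ℤ) :
        Matrix (Fin 4) (Fin 4) ℤ) - 1).det = 0) ∧
      (∀ k : Fin 4 → ℤ,
        (A₁ : Matrix (Fin 4) (Fin 4) ℤ).mulVec k = k →
        (A₂ : Matrix (Fin 4) (Fin 4) ℤ).mulVec k = k → k = 0) ∧
      ¬ IsOfFinOrder A₁ ∧
      IsEmpty (↥(Subgroup.closure {A₁, A₂} : Subgroup (GL (Fin 4) ℤ)) ≃*
        Multiplicative (ZMod 2) × Multiplicative (ZMod 2)) :=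
  open FourDimCounterexample in
  ⟨A₁ a, A₂, rfl, rfl, A₁_mul_A₂ a, det_A₁_zpow_mul_A₂_zpow_sub_one a,
    fun _ h₁ h₂ => eq_zero_of_A₁_mulVec_eq_self_of_A₂_mulVec_eq_self h₁ h₂, not_isOfFinOrder_A₁ a,
    Subgroup.isEmpty_mulEquiv_of_not_isOfFinOrder (Subgroup.subset_closure (Set.mem_insert _ _))
      (not_isOfFinOrder_A₁ a)⟩
end
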